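/- arXiv:1912.02030 — 10 statements merged into one kernel-verified Lean document; each statement's English description precedes it below -/
import Mathlib

section
/- Let n, m, p, r ∈ ℕ with r ≥ 1, let A ∈ ℝ^{n×n}, C ∈ ℝ^{p×n}, and let G : ℝ → ℝ^{n×m} be a smooth matrix-valued function such that C A^k G(t) = 0 for all k = 0, …, r−2 and all t ∈ ℝ. Then for all integers i, j ≥ 0 with i + j ≤ r − 1 and all t ∈ ℝ: C A^i (D_A^j G)(t) = 0 whenever i + j ≤ r − 2, and C A^i (D_A^j G)(t) = (−1)^j · C A^{r−1} G(t) whenever i + j = r − 1. In particular, the block matrix 𝒞ℬ(t) with (i,j)-block C A^{i−1} (D_A^{j−1} G)(t) (1 ≤ i, j ≤ r) is block anti-triangular: its blocks vanish for i + j ≤ r and its anti-diagonal blocks (i + j = r + 1) equal (−1)^{j−1} C A^{r−1} G(t). -/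
open Matrix

/-- Entrywise derivative of a matrix-valued function. -/
noncomputable def matDeriv {a b : ℕ} (M : ℝ → Matrix (Fin a) (Fin b) ℝ) :
    ℝ → Matrix (Fin a) (Fin b) ℝ :=
  fun t => Matrix.of fun i j => deriv (fun s => M s i j) t

/-- The operator `(D_A M)(t) = M'(t) - A · M(t)`. -/
noncomputable def DA {n k : ℕ} (A : Matrix (Fin n) (Fin n) ℝ)
    (M : ℝ → Matrix (Fin n) (Fin k) ℝ) : ℝ → Matrix (Fin n) (Fin k) ℝ :=
  fun t => matDeriv M t - A * M t

lemma smooth_iter {n m : ℕ} (A : Matrix (Fin n) (Fin n) ℝ)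
    (G : ℝ → Matrix (Fin n) (Fin m) ℝ)
    (hG : ∀ i j, ContDiff ℝ (⊤ : ℕ∞) fun t => G t i j) :
    ∀ j (a : Fin n) (b : Fin m), ContDiff ℝ (⊤ : ℕ∞) fun t => ((DA A)^[j] G t) a b := by
  intro j
  induction j with
  | zero => exact fun a b => (hG a b).of_le (by simp)
  | succ j ih =>
    intro a b
    rw [Function.iterate_succ_apply']
    have h1 : ContDiff ℝ (⊤ : ℕ∞) fun t => matDeriv ((DA A)^[j] G) t a b := by
      simp only [matDeriv, Matrix.of_apply]
      exact (contDiff_infty_iff_deriv.mp (ih a b)).2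
    have h2 : ContDiff ℝ (⊤ : ℕ∞) fun t => (A * (DA A)^[j] G t) a b := by
      simp only [Matrix.mul_apply]
      exact ContDiff.sum fun l _ => contDiff_const.mul (ih l b)
    simpa [DA, Matrix.sub_apply] using h1.sub h2

lemma mul_matDeriv {n m p : ℕ} (B : Matrix (Fin p) (Fin n) ℝ)
    (M : ℝ → Matrix (Fin n) (Fin m) ℝ)
    (hM : ∀ a b, Differentiable ℝ fun t => M t a b) (t : ℝ) :
    B * matDeriv M t = matDeriv (fun s => B * M s) t := by
  ext a b
  simp only [matDeriv, Matrix.of_apply, Matrix.mul_apply]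
  rw [deriv_fun_sum (fun l _ => ((hM l b).const_mul (B a l)) t)]
  refine Finset.sum_congr rfl fun l _ => ?_
  rw [deriv_const_mul _ ((hM l b) t)]

theorem stmt0 (n m p r : ℕ) (hr : 1 ≤ r)
    (A : Matrix (Fin n) (Fin n) ℝ) (C : Matrix (Fin p) (Fin n) ℝ)
    (G : ℝ → Matrix (Fin n) (Fin m) ℝ)
    (hG : ∀ i j, ContDiff ℝ (⊤ : ℕ∞) fun t => G t i j)
    (hCAG : ∀ k : ℕ, k + 2 ≤ r → ∀ t : ℝ, C * A ^ k * G t = 0) :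
    (∀ i j : ℕ, i + j + 2 ≤ r → ∀ t : ℝ, C * A ^ i * ((DA A)^[j] G t) = 0) ∧
    (∀ i j : ℕ, i + j + 1 = r → ∀ t : ℝ,
      C * A ^ i * ((DA A)^[j] G t) = ((-1 : ℝ) ^ j) • (C * A ^ (r - 1) * G t)) ∧
    (∀ t : ℝ, ∀ i j : Fin r, ∀ a : Fin p, ∀ b : Fin m,
      (((i : ℕ) + (j : ℕ) + 2 ≤ r →
        ((Matrix.of fun (iq : Fin r × Fin p) (l : Fin n) => (C * A ^ (iq.1 : ℕ)) iq.2 l) *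
          (Matrix.of fun (l : Fin n) (jq : Fin r × Fin m) => ((DA A)^[(jq.1 : ℕ)] G t) l jq.2))
          (i, a) (j, b) = 0) ∧
      ((i : ℕ) + (j : ℕ) + 1 = r →
        ((Matrix.of fun (iq : Fin r × Fin p) (l : Fin n) => (C * A ^ (iq.1 : ℕ)) iq.2 l) *
          (Matrix.of fun (l : Fin n) (jq : Fin r × Fin m) => ((DA A)^[(jq.1 : ℕ)] G t) l jq.2))
          (i, a) (j, b) = (((-1 : ℝ) ^ (j : ℕ)) • (C * A ^ (r - 1) * G t)) a b))) := by
  have hsm := smooth_iter A G hG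
  have hdiff : ∀ j (a : Fin n) (b : Fin m),
      Differentiable ℝ fun t => ((DA A)^[j] G t) a b :=
    fun j a b => (hsm j a b).differentiable (by simp)
  -- expansion of C * A^i * (DA^[j+1] G)
  have hstep : ∀ (i j : ℕ) (t : ℝ),
      C * A ^ i * ((DA A)^[j+1] G t) =
        matDeriv (fun s => C * A ^ i * ((DA A)^[j] G s)) t
          - C * A ^ (i+1) * ((DA A)^[j] G t) := by
    intro i j t
    rw [Function.iterate_succ_apply']
    have : (DA A) ((DA A)^[j] G) t = matDeriv ((DA A)^[j] G) t - A * (DA A)^[j] G t := rfl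
    rw [this, Matrix.mul_sub, mul_matDeriv _ _ (hdiff j) t]
    congr 1
    rw [pow_succ, Matrix.mul_assoc, Matrix.mul_assoc, Matrix.mul_assoc]
  have hzero : ∀ (F : ℝ → Matrix (Fin p) (Fin m) ℝ), (∀ s, F s = 0) →
      ∀ t, matDeriv F t = 0 := by
    intro F hF t
    ext a b
    simp only [matDeriv, Matrix.of_apply]
    have : (fun s => F s a b) = fun _ => (0 : ℝ) := by
      funext s; rw [hF s]; rfl
    rw [this, deriv_const]
    rfl
  have key : ∀ j : ℕ,
      (∀ i, i + j + 2 ≤ r → ∀ t : ℝ, C * A ^ i * ((DA A)^[j] G t) = 0) ∧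
      (∀ i, i + j + 1 = r → ∀ t : ℝ,
        C * A ^ i * ((DA A)^[j] G t) = ((-1 : ℝ) ^ j) • (C * A ^ (r - 1) * G t)) := by
    intro j
    induction j with
    | zero =>
      constructor
      · intro i hi t; simpa using hCAG i (by omega) t
      · intro i hi t
        have : i = r - 1 := by omega
        subst this
        simp
    | succ j ih =>
      constructor
      · intro i hi t
        rw [hstep i j t, hzero _ (fun s => ih.1 i (by omega) s) t,
          ih.1 (i+1) (by omega) t, sub_zero]
      · intro i hi t
        rw [hstep i j t, hzero _ (fun s => ih.1 i (by omega) s) t,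
          ih.2 (i+1) (by omega) t, zero_sub, ← neg_smul, pow_succ]
        ring_nf
  refine ⟨fun i j h => (key j).1 i h, fun i j => (key j).2 i, ?_⟩
  intro t i j a b
  have hentry : ((Matrix.of fun (iq : Fin r × Fin p) (l : Fin n) => (C * A ^ (iq.1 : ℕ)) iq.2 l) *
          (Matrix.of fun (l : Fin n) (jq : Fin r × Fin m) => ((DA A)^[(jq.1 : ℕ)] G t) l jq.2))
          (i, a) (j, b) = (C * A ^ (i : ℕ) * ((DA A)^[(j : ℕ)] G t)) a b := by
    rw [Matrix.mul_apply, Matrix.mul_apply]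
    rfl
  constructor
  · intro h
    rw [hentry, (key (j : ℕ)).1 (i : ℕ) h t]
    rfl
  · intro h
    rw [hentry, (key (j : ℕ)).2 (i : ℕ) h t]
end

section
/- Let p, m, r ∈ ℕ with r ≥ 1, and let G be an rp × rm real block matrix with blocks G_{ij} ∈ ℝ^{p×m} for 1 ≤ i, j ≤ r, such that G_{ij} = 0 whenever i + j ≤ r and each anti-diagonal block G_{i, r+1−i} has rank p (full row rank). Then G has rank rp; equivalently, G Gᵀ ∈ ℝ^{rp×rp} is invertible. -/
/-!
Suppose `v ᵥ* G = 0` and write `vᵢ` for the blocks of `v`. In block column `r - 1 - i` the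
blocks `G_{i' (r-1-i)}` with `i' < i` vanish, so once `v_{i'} = 0` is known for all `i' > i`
the column reads `vᵢ ᵥ* G_{i (r-1-i)} = 0`, and full row rank of the anti-diagonal block gives
`vᵢ = 0`. Hence the rows of `G` are independent, and over `ℝ` the Gram matrix `G * Gᵀ` has the
same rank as `G`.
-/

open Matrix

namespace Matrix

variable {K ι κ : Type*} [Field K] [Fintype ι]

theorem linearIndependent_row_of_rank_eq_card [Fintype κ] {M : Matrix ι κ K}
    (h : M.rank = Fintype.card ι) : LinearIndependent K M.row := by
  rw [linearIndependent_iff_card_eq_finrank_span, Set.finrank, ← rank_eq_finrank_span_row, h]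

theorem eq_zero_of_vecMul_eq_zero_of_linearIndependent {M : Matrix ι κ K}
    (hM : LinearIndependent K M.row) {w : ι → K} (hw : w ᵥ* M = 0) : w = 0 :=
  vecMul_injective_iff.mpr hM (hw.trans (zero_vecMul M).symm)

theorem vecMul_of_blocks_apply {ρ σ : Type*} [Fintype ρ] (B : ρ → σ → Matrix ι κ K)
    (v : ρ × ι → K) (j : σ) (q : κ) :
    (v ᵥ* of fun (iq : ρ × ι) (jq : σ × κ) => B iq.1 jq.1 iq.2 jq.2) (j, q) =
      ∑ i, ((fun s => v (i, s)) ᵥ* B i j) q := by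
  simp only [vecMul, dotProduct, Fintype.sum_prod_type, of_apply]

theorem linearIndependent_row_of_blockAntiTriangular {r : ℕ} (B : Fin r → Fin r → Matrix ι κ K)
    (hzero : ∀ i j : Fin r, j < i.rev → B i j = 0)
    (hanti : ∀ i : Fin r, LinearIndependent K (B i i.rev).row) :
    LinearIndependent K (of fun (iq : Fin r × ι) (jq : Fin r × κ) => B iq.1 jq.1 iq.2 jq.2).row := by
  rw [← vecMul_injective_iff, ← coe_vecMulLinear, injective_iff_map_eq_zero]
  intro v hv
  have hblock : ∀ i : Fin r, (fun s => v (i, s)) = 0 := by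
    intro i
    induction i using WellFoundedGT.induction with
    | ind i ih =>
      refine eq_zero_of_vecMul_eq_zero_of_linearIndependent (hanti i) (funext fun q => ?_)
      have hcol := vecMul_of_blocks_apply B v i.rev q
      rw [show v ᵥ* _ = 0 from hv, Pi.zero_apply, Finset.sum_eq_single i] at hcol
      · exact hcol.symm
      · intro i' _ hne
        rcases hne.lt_or_gt with hlt | hgt
        · rw [hzero i' i.rev (Fin.rev_lt_rev.mpr hlt), vecMul_zero, Pi.zero_apply]
        · rw [ih i' hgt, zero_vecMul, Pi.zero_apply]
      · simp
  funext ⟨i, s⟩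
  exact congrFun (hblock i) s

end Matrix

theorem stmt2_general (p m r : ℕ)
    (Gblk : Fin r → Fin r → Matrix (Fin p) (Fin m) ℝ)
    (hzero : ∀ i j : Fin r, (i : ℕ) + (j : ℕ) + 2 ≤ r → Gblk i j = 0)
    (hanti : ∀ i j : Fin r, (i : ℕ) + (j : ℕ) + 1 = r → (Gblk i j).rank = p) :
    let G : Matrix (Fin r × Fin p) (Fin r × Fin m) ℝ :=
      Matrix.of fun iq jq => Gblk iq.1 jq.1 iq.2 jq.2
    G.rank = r * p ∧ IsUnit (G * Gᵀ) := by
  intro G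
  have hG : LinearIndependent ℝ G.row := by
    refine linearIndependent_row_of_blockAntiTriangular Gblk
      (fun i j hj => hzero i j ?_) (fun i => linearIndependent_row_of_rank_eq_card ?_)
    · rw [Fin.lt_def, Fin.val_rev] at hj
      omega
    · rw [Fintype.card_fin]
      exact hanti i i.rev (by rw [Fin.val_rev]; omega)
  have hGGt : (G * Gᵀ).rank = Fintype.card (Fin r × Fin p) := by
    rw [rank_self_mul_transpose, hG.rank_matrix]
  exact ⟨by simpa using hG.rank_matrix,
    linearIndependent_rows_iff_isUnit.mp (linearIndependent_row_of_rank_eq_card hGGt)⟩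

theorem stmt2 (p m r : ℕ) (hr : 1 ≤ r)
    (Gblk : Fin r → Fin r → Matrix (Fin p) (Fin m) ℝ)
    (hzero : ∀ i j : Fin r, (i : ℕ) + (j : ℕ) + 2 ≤ r → Gblk i j = 0)
    (hanti : ∀ i j : Fin r, (i : ℕ) + (j : ℕ) + 1 = r → (Gblk i j).rank = p) :
    let G : Matrix (Fin r × Fin p) (Fin r × Fin m) ℝ :=
      Matrix.of fun iq jq => Gblk iq.1 jq.1 iq.2 jq.2
    G.rank = r * p ∧ IsUnit (G * Gᵀ) :=
  stmt2_general p m r Gblk hzero hanti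
end

section
/- Let k, n, l ∈ ℕ with k ≤ n. Let 𝒞 ∈ ℝ^{k×n}, ℬ ∈ ℝ^{n×l} be such that 𝒞ℬ (𝒞ℬ)ᵀ ∈ ℝ^{k×k} is invertible, and let V ∈ ℝ^{n×(n−k)} be injective (full column rank) with range V ⊆ ker 𝒞. Set (𝒞ℬ)† := (𝒞ℬ)ᵀ (𝒞ℬ (𝒞ℬ)ᵀ)⁻¹, V† := (VᵀV)⁻¹ Vᵀ, and 𝒩 := V† (I_n − ℬ (𝒞ℬ)† 𝒞) ∈ ℝ^{(n−k)×n}. Then 𝒞 has rank k, and the square matrix U := [𝒞; 𝒩] ∈ ℝ^{n×n} (stacking 𝒞 on top of 𝒩) is invertible with U⁻¹ = [ℬ (𝒞ℬ)†, V]. -/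
/-!
The row block `𝒞` has right inverse `ℬ (𝒞ℬ)†` and annihilates `V`, while `V†` is a left inverse
of `V`. Since `I - ℬ (𝒞ℬ)† 𝒞` kills `ℬ (𝒞ℬ)†` and fixes `V`, the product `[𝒞; 𝒩] [ℬ (𝒞ℬ)†, V]`
is block diagonal with identity blocks; the product is square, so the other product is `1` too.
A right inverse also forces `𝒞` to have full row rank.
-/

open Matrix

namespace Matrix

variable {m n p K : Type*} [Fintype m] [Fintype n]

theorem mul_transpose_mul_inv_eq_one [DecidableEq m] [CommRing K] {A : Matrix m n K}
    (h : IsUnit (A * Aᵀ)) : A * (Aᵀ * (A * Aᵀ)⁻¹) = 1 := by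
  rw [← Matrix.mul_assoc]
  exact mul_nonsing_inv _ ((isUnit_iff_isUnit_det _).mp h)

theorem inv_transpose_mul_self_mul_transpose_mul_self [DecidableEq n] [CommRing K]
    {A : Matrix m n K} (h : IsUnit (Aᵀ * A)) : (Aᵀ * A)⁻¹ * Aᵀ * A = 1 := by
  rw [Matrix.mul_assoc]
  exact nonsing_inv_mul _ ((isUnit_iff_isUnit_det _).mp h)

theorem isUnit_transpose_mul_self_of_injective [DecidableEq n] [Field K] [LinearOrder K]
    [IsStrictOrderedRing K] {A : Matrix m n K} (hA : Function.Injective A.mulVec) :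
    IsUnit (Aᵀ * A) := by
  rw [← mulVec_injective_iff_isUnit, ← coe_mulVecLin, ← LinearMap.ker_eq_bot,
    ker_mulVecLin_transpose_mul_self, LinearMap.ker_eq_bot]
  exact hA

theorem rank_eq_card_height_of_mul_eq_one [DecidableEq m] [Field K] {A : Matrix m n K}
    {B : Matrix n m K} (h : A * B = 1) : A.rank = Fintype.card m := by
  refine le_antisymm A.rank_le_card_height ?_
  simpa [h] using A.rank_mul_le_left B

theorem fromRows_mul_fromCols_eq_one [DecidableEq m] [DecidableEq n] [DecidableEq p] [Ring K]
    {C : Matrix m n K} {P : Matrix n m K} {V : Matrix n p K} {W : Matrix p n K}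
    (hCP : C * P = 1) (hCV : C * V = 0) (hWV : W * V = 1) :
    fromRows C (W * (1 - P * C)) * fromCols P V = 1 := by
  have hP : (1 - P * C) * P = 0 := by
    rw [Matrix.sub_mul, Matrix.one_mul, Matrix.mul_assoc, hCP, Matrix.mul_one, sub_self]
  have hV : (1 - P * C) * V = V := by
    rw [Matrix.sub_mul, Matrix.one_mul, Matrix.mul_assoc, hCV, Matrix.mul_zero, sub_zero]
  rw [fromRows_mul_fromCols, hCP, hCV, Matrix.mul_assoc, hP, Matrix.mul_zero, Matrix.mul_assoc, hV,
    hWV, fromBlocks_one]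

end Matrix

theorem stmt3 (k n l : ℕ) (hk : k ≤ n)
    (𝒞 : Matrix (Fin k) (Fin n) ℝ) (ℬ : Matrix (Fin n) (Fin l) ℝ)
    (V : Matrix (Fin n) (Fin (n - k)) ℝ)
    (hCB : IsUnit (𝒞 * ℬ * (𝒞 * ℬ)ᵀ))
    (hV : Function.Injective V.mulVec)
    (hker : ∀ x : Fin (n - k) → ℝ, 𝒞.mulVec (V.mulVec x) = 0) :
    let CBdag : Matrix (Fin l) (Fin k) ℝ := (𝒞 * ℬ)ᵀ * (𝒞 * ℬ * (𝒞 * ℬ)ᵀ)⁻¹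
    let Vdag : Matrix (Fin (n - k)) (Fin n) ℝ := (Vᵀ * V)⁻¹ * Vᵀ
    let 𝒩 : Matrix (Fin (n - k)) (Fin n) ℝ := Vdag * (1 - ℬ * CBdag * 𝒞)
    let U : Matrix (Fin k ⊕ Fin (n - k)) (Fin n) ℝ := Matrix.fromRows 𝒞 𝒩
    let Uinv : Matrix (Fin n) (Fin k ⊕ Fin (n - k)) ℝ := Matrix.fromCols (ℬ * CBdag) V
    𝒞.rank = k ∧ U * Uinv = 1 ∧ Uinv * U = 1 := by
  intro CBdag Vdag 𝒩 U Uinv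
  have hCP : 𝒞 * (ℬ * CBdag) = 1 := by
    rw [← Matrix.mul_assoc]
    exact mul_transpose_mul_inv_eq_one hCB
  have hCV : 𝒞 * V = 0 :=
    ext_iff_mulVec.2 fun x => by rw [← mulVec_mulVec, hker, zero_mulVec]
  have hWV : Vdag * V = 1 :=
    inv_transpose_mul_self_mul_transpose_mul_self (isUnit_transpose_mul_self_of_injective hV)
  have hUUinv : U * Uinv = 1 := fromRows_mul_fromCols_eq_one hCP hCV hWV
  have hcard : Fintype.card (Fin k ⊕ Fin (n - k)) = Fintype.card (Fin n) := by
    simp only [Fintype.card_sum, Fintype.card_fin]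
    omega
  refine ⟨?_, hUUinv, (mul_eq_one_comm_of_card_eq _ _ _ hcard).mp hUUinv⟩
  simpa using rank_eq_card_height_of_mul_eq_one hCP
end

section
/- Let k, l ∈ ℕ and let F : ℝ → ℝ^{k×l} be continuously differentiable such that F and its derivative F' are bounded on ℝ, and suppose there exists α > 0 such that det(F(t) F(t)ᵀ) ≥ α for all t ∈ ℝ. Then F(t) F(t)ᵀ is invertible for every t, the function t ↦ F(t)ᵀ (F(t) F(t)ᵀ)⁻¹ is continuously differentiable, and both this function and its derivative are bounded on ℝ. -/
open Matrix Asymptotics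

/-!
By Cramer's rule every entry of `Fᵀ (F Fᵀ)⁻¹` is a polynomial in the entries of `F` times
`1 / det (F Fᵀ)`. The `C¹` functions `ℝ → ℝ` that are bounded with bounded derivative form an
`ℝ`-subalgebra, and it contains `1 / g` along with `g` whenever `|g|` is bounded away from `0`,
because `(1 / g)' = -g' (1 / g)²`.
-/

lemma isBigO_top_one_iff {X : Type*} {f : X → ℝ} :
    f =O[⊤] (fun _ => (1 : ℝ)) ↔ ∃ c, ∀ x, |f x| ≤ c := by
  rw [isBigO_top]
  simp [Real.norm_eq_abs]

lemma exists_forall_abs_le_of_isBigO_top_one {ι X : Type*} [Finite ι] {f : ι → X → ℝ}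
    (hf : ∀ i, f i =O[⊤] (fun _ => (1 : ℝ))) : ∃ c, ∀ x i, |f i x| ≤ c := by
  choose c hc using fun i => isBigO_top_one_iff.1 (hf i)
  obtain ⟨M, hM⟩ := (Set.finite_range c).bddAbove
  exact ⟨M, fun x i => (hc i x).trans (hM ⟨i, rfl⟩)⟩

def boundedC1 : Subalgebra ℝ (ℝ → ℝ) where
  carrier := {f | ContDiff ℝ 1 f ∧ f =O[⊤] (fun _ => (1 : ℝ)) ∧ deriv f =O[⊤] (fun _ => (1 : ℝ))}
  mul_mem' {f g} hf hg := by
    have hderiv : deriv (f * g) = deriv f * g + f * deriv g := by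
      ext t
      exact deriv_mul ((hf.1.differentiable one_ne_zero) t) ((hg.1.differentiable one_ne_zero) t)
    refine ⟨hf.1.mul hg.1, by simpa using hf.2.1.mul hg.2.1, ?_⟩
    rw [hderiv]
    simpa using (hf.2.2.mul hg.2.1).add (hf.2.1.mul hg.2.2)
  add_mem' {f g} hf hg := by
    have hderiv : deriv (f + g) = deriv f + deriv g := by
      ext t
      exact deriv_add ((hf.1.differentiable one_ne_zero) t) ((hg.1.differentiable one_ne_zero) t)
    refine ⟨hf.1.add hg.1, hf.2.1.add hg.2.1, ?_⟩
    rw [hderiv]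
    exact hf.2.2.add hg.2.2
  algebraMap_mem' c := by
    have hderiv : deriv (algebraMap ℝ (ℝ → ℝ) c) = 0 := deriv_const' c
    exact ⟨contDiff_const, isBigO_const_const _ one_ne_zero _, hderiv ▸ isBigO_zero _ _⟩

lemma inv_mem_boundedC1 {f : ℝ → ℝ} (hf : f ∈ boundedC1) {α : ℝ} (hα : 0 < α)
    (hfα : ∀ t, α ≤ |f t|) : f⁻¹ ∈ boundedC1 := by
  have hf0 : ∀ t, f t ≠ 0 := fun t => abs_pos.1 (hα.trans_le (hfα t))
  have hbdd : f⁻¹ =O[⊤] (fun _ => (1 : ℝ)) := isBigO_top_one_iff.2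
    ⟨α⁻¹, fun t => by simpa using inv_anti₀ hα (hfα t)⟩
  have hderiv : deriv f⁻¹ = -(deriv f * (f⁻¹ * f⁻¹)) := by
    ext t
    rw [deriv_inv'' ((hf.1.differentiable one_ne_zero) t) (hf0 t)]
    simp [div_eq_mul_inv, sq]
  refine ⟨hf.1.inv hf0, hbdd, ?_⟩
  rw [hderiv]
  simpa using (hf.2.2.mul (hbdd.mul hbdd)).neg_left

section EntrywiseMembership

variable {X R A : Type*} [CommRing R] [SetLike A (X → R)] [SubringClass A (X → R)] (S : A)
  {m n p : Type*} [Fintype n]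

lemma fun_mul_apply_mem {M : X → Matrix m n R} {N : X → Matrix n p R}
    (hM : ∀ i j, (fun x => M x i j) ∈ S) (hN : ∀ i j, (fun x => N x i j) ∈ S) (i : m) (j : p) :
    (fun x => (M x * N x) i j) ∈ S := by
  have hexpand : (fun x => (M x * N x) i j) = ∑ k, (fun x => M x i k) * fun x => N x k j := by
    ext x
    simp [Matrix.mul_apply, Finset.sum_apply]
  rw [hexpand]
  exact sum_mem fun k _ => mul_mem (hM i k) (hN k j)

variable [DecidableEq n]

lemma fun_det_mem {M : X → Matrix n n R} (hM : ∀ i j, (fun x => M x i j) ∈ S) :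
    (fun x => (M x).det) ∈ S := by
  have hexpand : (fun x => (M x).det) =
      ∑ σ : Equiv.Perm n, (Equiv.Perm.sign σ : ℤ) • ∏ i, fun x => M x (σ i) i := by
    ext x
    simp [Matrix.det_apply, Finset.sum_apply, Finset.prod_apply, Units.smul_def]
  rw [hexpand]
  exact sum_mem fun σ _ => zsmul_mem (prod_mem fun i _ => hM (σ i) i) _

lemma fun_adjugate_apply_mem {M : X → Matrix n n R} (hM : ∀ i j, (fun x => M x i j) ∈ S)
    (i j : n) : (fun x => (M x).adjugate i j) ∈ S := by
  simp only [adjugate_apply]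
  refine fun_det_mem S fun a b => ?_
  rcases eq_or_ne a j with rfl | hne
  · rcases eq_or_ne b i with rfl | hne'
    · simp only [updateRow_self, Pi.single_eq_same]
      exact one_mem S
    · simp only [updateRow_self, Pi.single_eq_of_ne hne']
      exact zero_mem S
  · simpa only [updateRow_ne hne] using hM a b

end EntrywiseMembership

lemma fun_inv_apply_mem {X K A : Type*} [Field K] [SetLike A (X → K)] [SubringClass A (X → K)]
    (S : A) {n : Type*} [Fintype n] [DecidableEq n] {M : X → Matrix n n K}
    (hM : ∀ i j, (fun x => M x i j) ∈ S) (hdet : (fun x => (M x).det⁻¹) ∈ S) (i j : n) :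
    (fun x => (M x)⁻¹ i j) ∈ S := by
  have hcramer :
      (fun x => (M x)⁻¹ i j) = (fun x => (M x).det⁻¹) * fun x => (M x).adjugate i j := by
    ext x
    simp [Matrix.inv_def, Ring.inverse_eq_inv']
  rw [hcramer]
  exact mul_mem hdet (fun_adjugate_apply_mem S hM i j)

theorem stmt4 (k l : ℕ) (F : ℝ → Matrix (Fin k) (Fin l) ℝ)
    (hF : ∀ i j, ContDiff ℝ 1 fun t => F t i j)
    (hFbd : ∃ c : ℝ, ∀ (t : ℝ) (i : Fin k) (j : Fin l), |F t i j| ≤ c)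
    (hF'bd : ∃ c : ℝ, ∀ (t : ℝ) (i : Fin k) (j : Fin l), |deriv (fun s => F s i j) t| ≤ c)
    (α : ℝ) (hα : 0 < α)
    (hdet : ∀ t : ℝ, α ≤ (F t * (F t)ᵀ).det) :
    (∀ t : ℝ, IsUnit (F t * (F t)ᵀ)) ∧
    (∀ (i : Fin l) (j : Fin k), ContDiff ℝ 1 fun t => ((F t)ᵀ * (F t * (F t)ᵀ)⁻¹) i j) ∧
    (∃ c : ℝ, ∀ (t : ℝ) (i : Fin l) (j : Fin k), |((F t)ᵀ * (F t * (F t)ᵀ)⁻¹) i j| ≤ c) ∧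
    (∃ c : ℝ, ∀ (t : ℝ) (i : Fin l) (j : Fin k),
      |deriv (fun s => ((F s)ᵀ * (F s * (F s)ᵀ)⁻¹) i j) t| ≤ c) := by
  obtain ⟨c₀, hc₀⟩ := hFbd
  obtain ⟨c₁, hc₁⟩ := hF'bd
  have hFmem : ∀ i j, (fun t => F t i j) ∈ boundedC1 := fun i j =>
    ⟨hF i j, isBigO_top_one_iff.2 ⟨c₀, (hc₀ · i j)⟩, isBigO_top_one_iff.2 ⟨c₁, (hc₁ · i j)⟩⟩
  have hFTmem : ∀ i j, (fun t => (F t)ᵀ i j) ∈ boundedC1 := fun i j => hFmem j i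
  have hGmem := fun_mul_apply_mem boundedC1 hFmem hFTmem
  have hdetInv : (fun t => (F t * (F t)ᵀ).det⁻¹) ∈ boundedC1 :=
    inv_mem_boundedC1 (fun_det_mem boundedC1 hGmem) hα fun t => (hdet t).trans (le_abs_self _)
  have hPmem := fun_mul_apply_mem boundedC1 hFTmem (fun_inv_apply_mem boundedC1 hGmem hdetInv)
  refine ⟨fun t => ?_, fun i j => (hPmem i j).1, ?_, ?_⟩
  · rw [isUnit_iff_isUnit_det, isUnit_iff_ne_zero]
    exact (hα.trans_le (hdet t)).ne'
  · obtain ⟨c, hc⟩ := exists_forall_abs_le_of_isBigO_top_one fun p : Fin l × Fin k =>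
      (hPmem p.1 p.2).2.1
    exact ⟨c, fun t i j => hc t (i, j)⟩
  · obtain ⟨c, hc⟩ := exists_forall_abs_le_of_isBigO_top_one fun p : Fin l × Fin k =>
      (hPmem p.1 p.2).2.2
    exact ⟨c, fun t i j => hc t (i, j)⟩
end

section
/- Let A ∈ ℝ^{n×n} and let M : ℝ → ℝ^{n×q} and N : ℝ → ℝ^{q×m} be smooth matrix-valued functions. Then for every j ∈ ℕ and every t ∈ ℝ: D_A^j (M·N)(t) = Σ_{k=0}^{j} binom(j, k) · (D_A^k M)(t) · N^{(j−k)}(t), where N^{(i)} denotes the i-th derivative of N. -/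
open Matrix

lemma smooth_matDeriv {a b : ℕ} {M : ℝ → Matrix (Fin a) (Fin b) ℝ}
    (hM : ∀ i j, ContDiff ℝ (⊤ : ℕ∞) fun t => M t i j) :
    ∀ i j, ContDiff ℝ (⊤ : ℕ∞) fun t => matDeriv M t i j := by
  intro i j
  have h : ContDiff ℝ ((⊤ : ℕ∞) : WithTop ℕ∞) (fun t => M t i j) := by exact hM i j
  have := (contDiff_infty_iff_deriv.mp h).2
  simpa [matDeriv] using this

lemma smooth_matDeriv_iter {a b : ℕ} {M : ℝ → Matrix (Fin a) (Fin b) ℝ}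
    (hM : ∀ i j, ContDiff ℝ (⊤ : ℕ∞) fun t => M t i j) (k : ℕ) :
    ∀ i j, ContDiff ℝ (⊤ : ℕ∞) fun t => matDeriv^[k] M t i j := by
  induction k with
  | zero => simpa using hM
  | succ k ih =>
      rw [Function.iterate_succ_apply']
      exact smooth_matDeriv ih

lemma smooth_DA {n k : ℕ} {A : Matrix (Fin n) (Fin n) ℝ}
    {M : ℝ → Matrix (Fin n) (Fin k) ℝ}
    (hM : ∀ i j, ContDiff ℝ (⊤ : ℕ∞) fun t => M t i j) :
    ∀ i j, ContDiff ℝ (⊤ : ℕ∞) fun t => DA A M t i j := by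
  intro i j
  have h1 := smooth_matDeriv hM i j
  have h2 : ContDiff ℝ (⊤ : ℕ∞) fun t => (A * M t) i j := by
    simp only [Matrix.mul_apply]
    exact ContDiff.sum fun l _ => contDiff_const.mul (hM l j)
  simpa [DA, Matrix.sub_apply] using h1.sub h2

lemma smooth_DA_iter {n k : ℕ} {A : Matrix (Fin n) (Fin n) ℝ}
    {M : ℝ → Matrix (Fin n) (Fin k) ℝ}
    (hM : ∀ i j, ContDiff ℝ (⊤ : ℕ∞) fun t => M t i j) (c : ℕ) :
    ∀ i j, ContDiff ℝ (⊤ : ℕ∞) fun t => (DA A)^[c] M t i j := by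
  induction c with
  | zero => simpa using hM
  | succ c ih =>
      rw [Function.iterate_succ_apply']
      exact smooth_DA ih

lemma smoothEntry_mul {a b c : ℕ} {M : ℝ → Matrix (Fin a) (Fin b) ℝ}
    {N : ℝ → Matrix (Fin b) (Fin c) ℝ}
    (hM : ∀ i j, ContDiff ℝ (⊤ : ℕ∞) fun t => M t i j)
    (hN : ∀ i j, ContDiff ℝ (⊤ : ℕ∞) fun t => N t i j) :
    ∀ i j, ContDiff ℝ (⊤ : ℕ∞) fun t => (M t * N t) i j := by
  intro i j
  simp only [Matrix.mul_apply]
  exact ContDiff.sum fun l _ => (hM i l).mul (hN l j)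

lemma matDeriv_mul {a b c : ℕ} {M : ℝ → Matrix (Fin a) (Fin b) ℝ}
    {N : ℝ → Matrix (Fin b) (Fin c) ℝ}
    (hM : ∀ i j, ContDiff ℝ (⊤ : ℕ∞) fun t => M t i j)
    (hN : ∀ i j, ContDiff ℝ (⊤ : ℕ∞) fun t => N t i j) (t : ℝ) :
    matDeriv (fun s => M s * N s) t = matDeriv M t * N t + M t * matDeriv N t := by
  ext i j
  have hrw : (fun s => (M s * N s) i j) = fun s => ∑ l, M s i l * N s l j := by
    funext s; simp [Matrix.mul_apply]
  simp only [matDeriv, Matrix.of_apply, Matrix.add_apply, Matrix.mul_apply, hrw]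
  rw [deriv_fun_sum fun l _ =>
    (((hM i l).differentiable (by simp)).differentiableAt).fun_mul
      (((hN l j).differentiable (by simp)).differentiableAt)]
  rw [← Finset.sum_add_distrib]
  refine Finset.sum_congr rfl fun l _ => ?_
  rw [deriv_fun_mul (((hM i l).differentiable (by simp)).differentiableAt)
      (((hN l j).differentiable (by simp)).differentiableAt)]

lemma DA_mul {n a c : ℕ} {A : Matrix (Fin n) (Fin n) ℝ}
    {M : ℝ → Matrix (Fin n) (Fin a) ℝ} {N : ℝ → Matrix (Fin a) (Fin c) ℝ}
    (hM : ∀ i j, ContDiff ℝ (⊤ : ℕ∞) fun t => M t i j)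
    (hN : ∀ i j, ContDiff ℝ (⊤ : ℕ∞) fun t => N t i j) (t : ℝ) :
    DA A (fun s => M s * N s) t = DA A M t * N t + M t * matDeriv N t := by
  simp only [DA]
  rw [matDeriv_mul hM hN, Matrix.sub_mul, ← Matrix.mul_assoc]
  abel

lemma matDeriv_sum_smul {a b : ℕ} {S : Finset ℕ} {c : ℕ → ℝ}
    {F : ℕ → ℝ → Matrix (Fin a) (Fin b) ℝ}
    (hF : ∀ k ∈ S, ∀ i j, ContDiff ℝ (⊤ : ℕ∞) fun t => F k t i j) (t : ℝ) :
    matDeriv (fun s => ∑ k ∈ S, c k • F k s) t = ∑ k ∈ S, c k • matDeriv (F k) t := by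
  ext i j
  have hrw : (fun s => (∑ k ∈ S, c k • F k s) i j) = fun s => ∑ k ∈ S, c k * F k s i j := by
    funext s; simp [Matrix.sum_apply]
  simp only [matDeriv, Matrix.of_apply, Matrix.sum_apply, Matrix.smul_apply, smul_eq_mul, hrw]
  rw [deriv_fun_sum fun k hk =>
    (differentiableAt_const _).fun_mul (((hF k hk i j).differentiable (by simp)).differentiableAt)]
  refine Finset.sum_congr rfl fun k hk => ?_
  rw [deriv_const_mul _ (((hF k hk i j).differentiable (by simp)).differentiableAt)]

lemma DA_sum_smul {n a : ℕ} {A : Matrix (Fin n) (Fin n) ℝ} {S : Finset ℕ} {c : ℕ → ℝ}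
    {F : ℕ → ℝ → Matrix (Fin n) (Fin a) ℝ}
    (hF : ∀ k ∈ S, ∀ i j, ContDiff ℝ (⊤ : ℕ∞) fun t => F k t i j) (t : ℝ) :
    DA A (fun s => ∑ k ∈ S, c k • F k s) t = ∑ k ∈ S, c k • DA A (F k) t := by
  simp only [DA]
  rw [matDeriv_sum_smul hF, Matrix.mul_sum, ← Finset.sum_sub_distrib]
  refine Finset.sum_congr rfl fun k hk => ?_
  rw [Matrix.mul_smul, smul_sub]

lemma pascal_sum {G : Type*} [AddCommGroup G] [Module ℝ G] (j : ℕ) (c : ℕ → G) :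
    ∑ k ∈ Finset.range (j + 1), (j.choose k : ℝ) • (c (k + 1) + c k)
      = ∑ k ∈ Finset.range (j + 2), ((j + 1).choose k : ℝ) • c k := by
  have h1 : ∑ k ∈ Finset.range (j + 2), ((j + 1).choose k : ℝ) • c k
      = (∑ k ∈ Finset.range (j + 1), (((j + 1).choose (k + 1) : ℝ)) • c (k + 1)) + c 0 := by
    rw [Finset.sum_range_succ']; simp
  have h2 : ∀ k, ((j + 1).choose (k + 1) : ℝ) = (j.choose k : ℝ) + (j.choose (k + 1) : ℝ) := by
    intro k; rw [Nat.choose_succ_succ]; push_cast; ring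
  have h3 : ∑ k ∈ Finset.range (j + 1), (j.choose (k + 1) : ℝ) • c (k + 1) + c 0
      = ∑ k ∈ Finset.range (j + 1), (j.choose k : ℝ) • c k := by
    conv_rhs => rw [Finset.sum_range_succ']
    rw [Finset.sum_range_succ]
    simp
  calc ∑ k ∈ Finset.range (j + 1), (j.choose k : ℝ) • (c (k + 1) + c k)
      = ∑ k ∈ Finset.range (j + 1), ((j.choose k : ℝ) • c (k + 1) + (j.choose k : ℝ) • c k) := by
        simp [smul_add]
    _ = ∑ k ∈ Finset.range (j + 2), ((j + 1).choose k : ℝ) • c k := by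
        rw [Finset.sum_add_distrib, h1]
        conv_rhs => rw [Finset.sum_congr rfl (fun k _ => by rw [h2 k, add_smul])]
        rw [Finset.sum_add_distrib, add_assoc, h3]

theorem stmt5 (n q m : ℕ) (A : Matrix (Fin n) (Fin n) ℝ)
    (M : ℝ → Matrix (Fin n) (Fin q) ℝ) (N : ℝ → Matrix (Fin q) (Fin m) ℝ)
    (hM : ∀ i j, ContDiff ℝ (⊤ : ℕ∞) fun t => M t i j)
    (hN : ∀ i j, ContDiff ℝ (⊤ : ℕ∞) fun t => N t i j) :
    ∀ (j : ℕ) (t : ℝ),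
      (DA A)^[j] (fun s => M s * N s) t =
        ∑ k ∈ Finset.range (j + 1),
          (j.choose k : ℝ) • ((DA A)^[k] M t * matDeriv^[j - k] N t) := by
  intro j
  induction j with
  | zero => intro t; simp
  | succ j ih =>
      intro t
      rw [Function.iterate_succ_apply']
      have hfun : (DA A)^[j] (fun s => M s * N s)
          = fun s => ∑ k ∈ Finset.range (j + 1),
              (j.choose k : ℝ) • ((DA A)^[k] M s * matDeriv^[j - k] N s) := funext ih
      rw [hfun]
      have hsm : ∀ k ∈ Finset.range (j + 1), ∀ i l,
          ContDiff ℝ (⊤ : ℕ∞) fun t => ((DA A)^[k] M t * matDeriv^[j - k] N t) i l :=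
        fun k _ => smoothEntry_mul (smooth_DA_iter hM k) (smooth_matDeriv_iter hN (j - k))
      rw [DA_sum_smul hsm]
      have hterm : ∀ k ∈ Finset.range (j + 1),
          DA A (fun s => (DA A)^[k] M s * matDeriv^[j - k] N s) t
            = (DA A)^[k + 1] M t * matDeriv^[j + 1 - (k + 1)] N t
              + (DA A)^[k] M t * matDeriv^[j + 1 - k] N t := by
        intro k hk
        have hk' : k ≤ j := Nat.lt_succ_iff.mp (Finset.mem_range.mp hk)
        rw [DA_mul (smooth_DA_iter hM k) (smooth_matDeriv_iter hN (j - k))]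
        have e1 : j + 1 - (k + 1) = j - k := by omega
        have e2 : j + 1 - k = (j - k) + 1 := by omega
        rw [e1, e2, Function.iterate_succ_apply', Function.iterate_succ_apply']
      exact (Finset.sum_congr rfl fun k hk => by rw [hterm k hk]).trans
        (pascal_sum j (fun k => (DA A)^[k] M t * matDeriv^[j + 1 - k] N t))
end

section
/- Let n, k, l ∈ ℕ, let Y ∈ ℝ^{n×k} and V₁ ∈ ℝ^{l×k} with V₁ᵀ V₁ = I_k, set ℬ := Y V₁ᵀ ∈ ℝ^{n×l}, and let 𝒞 ∈ ℝ^{k×n} be such that 𝒞 Y ∈ ℝ^{k×k} is invertible. Then: (a) 𝒞ℬ (𝒞ℬ)ᵀ = (𝒞Y)(𝒞Y)ᵀ is invertible; (b) ℬ (𝒞ℬ)† = Y (𝒞Y)⁻¹, where (𝒞ℬ)† := (𝒞ℬ)ᵀ (𝒞ℬ (𝒞ℬ)ᵀ)⁻¹; and (c) ℬ (𝒞ℬ)† 𝒞 ℬ = ℬ, i.e., (I_n − ℬ (𝒞ℬ)† 𝒞) ℬ = 0. -/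
/-!
Write `A := 𝒞 Y`. Since `V₁ᵀ V₁ = 1`, right multiplication by `V₁ᵀ` preserves Gram products,
so `𝒞ℬ = A V₁ᵀ` has Gram matrix `A Aᵀ`, which is invertible. Hence the pseudoinverse of `A V₁ᵀ`
is `V₁ A⁻¹`, so `ℬ (𝒞ℬ)† = Y V₁ᵀ V₁ A⁻¹ = Y A⁻¹`, and `Y A⁻¹ 𝒞 ℬ = Y A⁻¹ A V₁ᵀ = ℬ`.
-/

open Matrix

namespace Matrix

variable {R : Type*} {k l m p : Type*} [Fintype k] [Fintype l] [DecidableEq k]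

theorem mul_transpose_mul_mul_transpose_of_transpose_mul_self_eq_one [CommSemiring R]
    {V : Matrix l k R} (hV : Vᵀ * V = 1) (A : Matrix m k R) (B : Matrix p k R) :
    A * Vᵀ * (B * Vᵀ)ᵀ = A * Bᵀ := by
  rw [transpose_mul, transpose_transpose, Matrix.mul_assoc, ← Matrix.mul_assoc Vᵀ, hV,
    Matrix.one_mul]

variable [CommRing R]

theorem transpose_mul_mul_transpose_inv_of_transpose_mul_self_eq_one
    {V : Matrix l k R} (hV : Vᵀ * V = 1) {A : Matrix k k R} (hA : IsUnit A) :
    (A * Vᵀ)ᵀ * (A * Vᵀ * (A * Vᵀ)ᵀ)⁻¹ = V * A⁻¹ := by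
  have hAT : IsUnit Aᵀ.det := by rwa [det_transpose, ← isUnit_iff_isUnit_det]
  rw [mul_transpose_mul_mul_transpose_of_transpose_mul_self_eq_one hV, mul_inv_rev,
    transpose_mul, transpose_transpose, Matrix.mul_assoc, ← Matrix.mul_assoc Aᵀ,
    mul_nonsing_inv _ hAT, Matrix.one_mul]

end Matrix

theorem stmt7 (n k l : ℕ) (Y : Matrix (Fin n) (Fin k) ℝ) (V₁ : Matrix (Fin l) (Fin k) ℝ)
    (hV : V₁ᵀ * V₁ = 1) (𝒞 : Matrix (Fin k) (Fin n) ℝ) (hCY : IsUnit (𝒞 * Y)) :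
    let ℬ : Matrix (Fin n) (Fin l) ℝ := Y * V₁ᵀ
    let CBdag : Matrix (Fin l) (Fin k) ℝ := (𝒞 * ℬ)ᵀ * (𝒞 * ℬ * (𝒞 * ℬ)ᵀ)⁻¹
    (𝒞 * ℬ * (𝒞 * ℬ)ᵀ = (𝒞 * Y) * (𝒞 * Y)ᵀ ∧ IsUnit (𝒞 * ℬ * (𝒞 * ℬ)ᵀ)) ∧
    ℬ * CBdag = Y * (𝒞 * Y)⁻¹ ∧
    (ℬ * CBdag * 𝒞 * ℬ = ℬ ∧ (1 - ℬ * CBdag * 𝒞) * ℬ = 0) := by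
  intro ℬ CBdag
  have hCB : 𝒞 * ℬ = 𝒞 * Y * V₁ᵀ := (Matrix.mul_assoc _ _ _).symm
  have hGram : 𝒞 * ℬ * (𝒞 * ℬ)ᵀ = 𝒞 * Y * (𝒞 * Y)ᵀ := by
    rw [hCB, mul_transpose_mul_mul_transpose_of_transpose_mul_self_eq_one hV]
  have hProj : ℬ * CBdag = Y * (𝒞 * Y)⁻¹ := by
    change ℬ * ((𝒞 * ℬ)ᵀ * (𝒞 * ℬ * (𝒞 * ℬ)ᵀ)⁻¹) = _
    rw [hCB, transpose_mul_mul_transpose_inv_of_transpose_mul_self_eq_one hV hCY,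
      ← Matrix.mul_assoc, Matrix.mul_assoc Y, hV, Matrix.mul_one]
  have hFix : ℬ * CBdag * 𝒞 * ℬ = ℬ := by
    rw [Matrix.mul_assoc _ 𝒞, hCB, hProj, Matrix.mul_assoc Y, ← Matrix.mul_assoc _ (𝒞 * Y),
      nonsing_inv_mul _ ((isUnit_iff_isUnit_det _).mp hCY), Matrix.one_mul]
  refine ⟨⟨hGram, hGram ▸ hCY.mul (isUnit_transpose _ |>.mpr hCY)⟩, hProj, hFix, ?_⟩
  rw [Matrix.sub_mul, Matrix.one_mul, hFix, sub_self]
end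

section
/- Let n, m, p, r ∈ ℕ with r ≥ 1 and rp ≤ n, let A ∈ ℝ^{n×n}, C ∈ ℝ^{p×n}, and let 𝒩 : ℝ → ℝ^{(n−rp)×n} be continuously differentiable such that U(t) := [Cᵀ, (CA)ᵀ, …, (C A^{r−1})ᵀ, 𝒩(t)ᵀ]ᵀ ∈ ℝ^{n×n} is invertible for every t ∈ ℝ. Let G : ℝ → ℝ^{n×m} be smooth with C A^k G(t) = 0 for all k = 0, …, r−2 and all t. Then for every t ∈ ℝ: (a) C U(t)⁻¹ = [I_p, 0, …, 0] (the first block row of the identity, in p×p blocks followed by an (n−rp)-column zero block); (b) for each i = 1, …, r−1, rows (i−1)p+1, …, ip of Â(t) := (U(t) A + U̇(t)) U(t)⁻¹ equal the block row [0, …, 0, I_p, 0, …, 0] with I_p in columns ip+1, …, (i+1)p and zeros elsewhere; (c) rows (i−1)p+1, …, ip of U(t) G(t) vanish for each i = 1, …, r−1, and rows (r−1)p+1, …, rp of U(t) G(t) equal C A^{r−1} G(t). -/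
open Matrix

/-- Entrywise derivative of a matrix-valued function (arbitrary index types). -/
noncomputable def matDeriv' {ι κ : Type*} (M : ℝ → Matrix ι κ ℝ) : ℝ → Matrix ι κ ℝ :=
  fun t => Matrix.of fun i j => deriv (fun s => M s i j) t

/-- `U(t)`: first `rp` rows are the stacked rows `C, CA, …, CA^{r−1}`, last `n−rp`
rows are `𝒩(t)`. -/
def Umat {n p : ℕ} (r : ℕ) (A : Matrix (Fin n) (Fin n) ℝ) (C : Matrix (Fin p) (Fin n) ℝ)
    (𝒩 : ℝ → Matrix (Fin (n - r * p)) (Fin n) ℝ) (t : ℝ) :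
    Matrix ((Fin r × Fin p) ⊕ Fin (n - r * p)) (Fin n) ℝ :=
  Matrix.of fun x j =>
    match x with
    | Sum.inl iq => (C * A ^ (iq.1 : ℕ)) iq.2 j
    | Sum.inr b => 𝒩 t b j

theorem stmt10 (n m p r : ℕ) (hr : 1 ≤ r) (hrp : r * p ≤ n)
    (A : Matrix (Fin n) (Fin n) ℝ) (C : Matrix (Fin p) (Fin n) ℝ)
    (𝒩 : ℝ → Matrix (Fin (n - r * p)) (Fin n) ℝ)
    (h𝒩 : ∀ i j, ContDiff ℝ 1 fun t => 𝒩 t i j)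
    (Uinv : ℝ → Matrix (Fin n) ((Fin r × Fin p) ⊕ Fin (n - r * p)) ℝ)
    (hUinv : ∀ t : ℝ, Umat r A C 𝒩 t * Uinv t = 1 ∧ Uinv t * Umat r A C 𝒩 t = 1)
    (G : ℝ → Matrix (Fin n) (Fin m) ℝ)
    (hG : ∀ i j, ContDiff ℝ (⊤ : ℕ∞) fun t => G t i j)
    (hCAG : ∀ k : ℕ, k + 2 ≤ r → ∀ t : ℝ, C * A ^ k * G t = 0) :
    -- (a)  C U(t)⁻¹ = [I_p, 0, …, 0]
    (∀ (t : ℝ) (a : Fin p) (x : (Fin r × Fin p) ⊕ Fin (n - r * p)),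
      (C * Uinv t) a x =
        match x with
        | Sum.inl jq => if (jq.1 : ℕ) = 0 ∧ jq.2 = a then (1 : ℝ) else 0
        | Sum.inr _ => 0) ∧
    -- (b)  block rows 1, …, r−1 of Â(t) = (U(t)A + U̇(t))U(t)⁻¹ are shifted identities
    (∀ (t : ℝ) (i : Fin r), (i : ℕ) + 2 ≤ r → ∀ (a : Fin p)
        (x : (Fin r × Fin p) ⊕ Fin (n - r * p)),
      ((Umat r A C 𝒩 t * A + matDeriv' (Umat r A C 𝒩) t) * Uinv t) (Sum.inl (i, a)) x =
        match x with
        | Sum.inl jq => if (jq.1 : ℕ) = (i : ℕ) + 1 ∧ jq.2 = a then (1 : ℝ) else 0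
        | Sum.inr _ => 0) ∧
    -- (c)  block rows of U(t)G(t): rows 1, …, r−1 vanish, row r equals C A^{r−1} G(t)
    (∀ (t : ℝ) (i : Fin r) (a : Fin p) (b : Fin m),
      ((i : ℕ) + 2 ≤ r → (Umat r A C 𝒩 t * G t) (Sum.inl (i, a)) b = 0) ∧
      ((i : ℕ) + 1 = r →
        (Umat r A C 𝒩 t * G t) (Sum.inl (i, a)) b = (C * A ^ (r - 1) * G t) a b)) := by
  refine ⟨?_, ?_, ?_⟩
  · -- (a)
    intro t a x
    have h0 : 0 < r := hr
    have key : (C * Uinv t) a x = (Umat r A C 𝒩 t * Uinv t) (Sum.inl (⟨0, h0⟩, a)) x := by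
      simp only [Matrix.mul_apply]
      refine Finset.sum_congr rfl fun k _ => ?_
      simp [Umat]
    rw [key, (hUinv t).1]
    rcases x with ⟨j, q⟩ | b
    · simp [Matrix.one_apply, Prod.ext_iff, Fin.ext_iff, eq_comm, and_comm]
    · simp [Matrix.one_apply]
  · -- (b)
    intro t i hi a x
    have hlt : (i : ℕ) + 1 < r := by omega
    set i' : Fin r := ⟨(i : ℕ) + 1, hlt⟩ with hi'
    have hrow : ∀ j, (Umat r A C 𝒩 t * A + matDeriv' (Umat r A C 𝒩) t) (Sum.inl (i, a)) j
        = Umat r A C 𝒩 t (Sum.inl (i', a)) j := by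
      intro j
      have hd : matDeriv' (Umat r A C 𝒩) t (Sum.inl (i, a)) j = 0 := by
        simp [matDeriv', Umat]
      have hmul : (C * A ^ ((i : ℕ) + 1)) a j = ∑ k, (C * A ^ (i : ℕ)) a k * A k j := by
        rw [pow_succ, ← Matrix.mul_assoc, Matrix.mul_apply]
      simp only [Matrix.add_apply, hd, add_zero, Matrix.mul_apply, Umat, Matrix.of_apply]
      simp only [Matrix.mul_apply] at hmul
      rw [hi']
      exact hmul.symm
    have key : ((Umat r A C 𝒩 t * A + matDeriv' (Umat r A C 𝒩) t) * Uinv t) (Sum.inl (i, a)) x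
        = (Umat r A C 𝒩 t * Uinv t) (Sum.inl (i', a)) x := by
      simp only [Matrix.mul_apply]
      exact Finset.sum_congr rfl fun k _ => by rw [hrow]
    rw [key, (hUinv t).1]
    rcases x with ⟨j, q⟩ | b
    · simp [Matrix.one_apply, Prod.ext_iff, Fin.ext_iff, hi', eq_comm, and_comm]
    · simp [Matrix.one_apply]
  · -- (c)
    intro t i a b
    have hUG : (Umat r A C 𝒩 t * G t) (Sum.inl (i, a)) b = (C * A ^ (i : ℕ) * G t) a b := by
      simp only [Matrix.mul_apply, Umat, Matrix.of_apply]
    constructor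
    · intro hi
      rw [hUG, hCAG (i : ℕ) hi t]
      simp
    · intro hi
      have : (i : ℕ) = r - 1 := by omega
      rw [hUG, this]
end

section
/- Let p, m, r, d ∈ ℕ with r ≥ 1, and let Γ̃ ∈ ℝ^{p×m} be such that Γ̃ Γ̃ᵀ is invertible (full row rank p). Let G be an rp × rm block matrix with blocks G_{ij} ∈ ℝ^{p×m} such that G_{ij} = 0 whenever i + j ≤ r and G_{r+1−j, j} = (−1)^{j−1} Γ̃ for each j = 1, …, r. Let P₁, …, P_r ∈ ℝ^{d×p} satisfy Σ_{i=1}^{r} P_i G_{ij} = 0 for every j = 1, …, r−1. Then P_i = 0 for all i = 2, …, r. -/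
open Matrix

theorem Matrix.eq_zero_of_mul_eq_zero_of_isUnit_mul_transpose {R l n o : Type*} [CommRing R]
    [Fintype n] [DecidableEq n] [Fintype o] {Γ : Matrix n o R} (hΓ : IsUnit (Γ * Γᵀ))
    {Q : Matrix l n R} (hQ : Q * Γ = 0) : Q = 0 := by
  have hdet : IsUnit (Γ * Γᵀ).det := (isUnit_iff_isUnit_det _).mp hΓ
  calc Q = Q * Γ * Γᵀ * (Γ * Γᵀ)⁻¹ := by
        rw [Matrix.mul_assoc Q, Matrix.mul_assoc, mul_nonsing_inv _ hdet, Matrix.mul_one]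
    _ = 0 := by rw [hQ, Matrix.zero_mul, Matrix.zero_mul]

theorem eq_zero_of_sum_mul_antiTriangular {R l n o : Type*} [Semiring R] [Fintype n] {r : ℕ}
    (G : Fin r → Fin r → Matrix n o R)
    (hzero : ∀ i j : Fin r, (i : ℕ) + (j : ℕ) + 2 ≤ r → G i j = 0)
    (hanti : ∀ i j : Fin r, (i : ℕ) + (j : ℕ) + 1 = r →
      ∀ Q : Matrix l n R, Q * G i j = 0 → Q = 0)
    (P : Fin r → Matrix l n R)
    (hP : ∀ j : Fin r, (j : ℕ) + 2 ≤ r → ∑ i, P i * G i j = 0) :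
    ∀ i : Fin r, 1 ≤ (i : ℕ) → P i = 0 := by
  intro i
  induction h : r - (i : ℕ) using Nat.strong_induction_on generalizing i with
  | _ n ih =>
    intro hi
    have hir := i.isLt
    -- Block column `j` is zero above row `i`, and the rows below `i` are already known to vanish.
    let j : Fin r := ⟨r - 1 - i, by omega⟩
    have hsum : ∑ k, P k * G k j = P i * G i j := by
      refine Finset.sum_eq_single i (fun k _ hki => ?_) (by simp)
      rcases lt_or_gt_of_ne (Fin.val_ne_of_ne hki) with hlt | hgt
      · rw [hzero k j (by simp only [j]; omega), Matrix.mul_zero]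
      · rw [ih (r - k) (by omega) k rfl (by omega), Matrix.zero_mul]
    refine hanti i j (by simp only [j]; omega) _ ?_
    rw [← hsum]
    exact hP j (by simp only [j]; omega)

theorem stmt12_general (p m r d : ℕ)
    (Γ : Matrix (Fin p) (Fin m) ℝ) (hΓ : IsUnit (Γ * Γᵀ))
    (G : Fin r → Fin r → Matrix (Fin p) (Fin m) ℝ)
    (hzero : ∀ i j : Fin r, (i : ℕ) + (j : ℕ) + 2 ≤ r → G i j = 0)
    (hanti : ∀ i j : Fin r, (i : ℕ) + (j : ℕ) + 1 = r → G i j = ((-1 : ℝ) ^ (j : ℕ)) • Γ)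
    (P : Fin r → Matrix (Fin d) (Fin p) ℝ)
    (hP : ∀ j : Fin r, (j : ℕ) + 2 ≤ r → ∑ i, P i * G i j = 0) :
    ∀ i : Fin r, 1 ≤ (i : ℕ) → P i = 0 := by
  refine eq_zero_of_sum_mul_antiTriangular G hzero (fun i j hij Q hQ => ?_) P hP
  rw [hanti i j hij, Matrix.mul_smul, smul_eq_zero] at hQ
  exact eq_zero_of_mul_eq_zero_of_isUnit_mul_transpose hΓ
    (hQ.resolve_left (pow_ne_zero _ (by norm_num)))

theorem stmt12 (p m r d : ℕ) (hr : 1 ≤ r)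
    (Γ : Matrix (Fin p) (Fin m) ℝ) (hΓ : IsUnit (Γ * Γᵀ))
    (G : Fin r → Fin r → Matrix (Fin p) (Fin m) ℝ)
    (hzero : ∀ i j : Fin r, (i : ℕ) + (j : ℕ) + 2 ≤ r → G i j = 0)
    (hanti : ∀ i j : Fin r, (i : ℕ) + (j : ℕ) + 1 = r → G i j = ((-1 : ℝ) ^ (j : ℕ)) • Γ)
    (P : Fin r → Matrix (Fin d) (Fin p) ℝ)
    (hP : ∀ j : Fin r, (j : ℕ) + 2 ≤ r → ∑ i, P i * G i j = 0) :
    ∀ i : Fin r, 1 ≤ (i : ℕ) → P i = 0 :=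
  stmt12_general p m r d Γ hΓ G hzero hanti P hP
end

section
/- There is no continuously differentiable function w : ℝ → ℝ such that w(t) ≠ 0 for all t ∈ ℝ, the functions w, 1/w and ẇ are all bounded on ℝ, and ẇ(t) = −2 w(t) for all t ∈ ℝ. Equivalently, there is no scalar Lyapunov transformation w taking the time-invariant scalar system Q = 1 to Q̂ = −1 via (w(t)·Q + ẇ(t))·w(t)⁻¹ = Q̂. -/
open Real

/-- `w t * exp (-(a * t))` has zero derivative, so it is constant. -/
theorem eq_mul_exp_of_deriv_eq_const_mul {a : ℝ} {w : ℝ → ℝ} (hw : Differentiable ℝ w)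
    (hode : ∀ t, deriv w t = a * w t) (t : ℝ) : w t = w 0 * exp (a * t) := by
  have hderiv : ∀ s, HasDerivAt (fun s => w s * exp (-(a * s))) 0 s := fun s => by
    have hexp : HasDerivAt (fun s => exp (-(a * s))) (exp (-(a * s)) * -a) s := by
      simpa using ((hasDerivAt_id s).const_mul a).neg.exp
    refine ((hw s).hasDerivAt.mul hexp).congr_deriv ?_
    rw [hode s]
    ring
  have hconst := is_const_of_deriv_eq_zero (fun s => (hderiv s).differentiableAt)
    (fun s => (hderiv s).deriv) t 0
  simp only [mul_zero, neg_zero, exp_zero, mul_one] at hconst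
  rw [← hconst, mul_assoc, ← exp_add, neg_add_cancel, exp_zero, mul_one]

theorem not_bounded_mul_exp {a c : ℝ} (ha : a ≠ 0) (hc : c ≠ 0) :
    ¬ ∃ C, ∀ t, |c * exp (a * t)| ≤ C := by
  rintro ⟨C, hC⟩
  have hpos : 0 < (|C| + 1) / |c| := by positivity
  have hval : |c * exp (a * (log ((|C| + 1) / |c|) / a))| = |C| + 1 := by
    rw [mul_div_cancel₀ _ ha, exp_log hpos, abs_mul, abs_of_pos hpos,
      mul_div_cancel₀ _ (abs_ne_zero.mpr hc)]
  linarith [hC (log ((|C| + 1) / |c|) / a), le_abs_self C]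

theorem stmt16 :
    ¬ ∃ w : ℝ → ℝ, ContDiff ℝ 1 w ∧ (∀ t : ℝ, w t ≠ 0) ∧
      (∃ c : ℝ, ∀ t : ℝ, |w t| ≤ c) ∧
      (∃ c : ℝ, ∀ t : ℝ, |1 / w t| ≤ c) ∧
      (∃ c : ℝ, ∀ t : ℝ, |deriv w t| ≤ c) ∧
      (∀ t : ℝ, deriv w t = -2 * w t) := by
  rintro ⟨w, hw, hne, ⟨C, hC⟩, -, -, hode⟩
  have hsol := eq_mul_exp_of_deriv_eq_const_mul (hw.differentiable one_ne_zero) hode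
  exact not_bounded_mul_exp (by norm_num) (hne 0) ⟨C, fun t => hsol t ▸ hC t⟩
end

section
/- Let n, m, p, r ∈ ℕ with r ≥ 1, let A ∈ ℝ^{n×n}, C ∈ ℝ^{p×n}, let W : ℝ → ℝ^{n×p} and R₁ : ℝ → ℝ^{m×p} be smooth with R₁(t)ᵀ R₁(t) = I_p for all t, set G(t) := W(t) R₁(t)ᵀ, and assume C A^k W(t) = 0 for k = 0, …, r−2 and C A^{r−1} W(t) invertible for all t. Define 𝒲(t) := [W(t), (D_A W)(t), …, (D_A^{r−1} W)(t)] ∈ ℝ^{n×rp} and the block upper-triangular matrix ℛ(t) ∈ ℝ^{rp×rm} with blocks ℛ_{ij}(t) = binom(j−1, i−1) (R₁^{(j−i)}(t))ᵀ for j ≥ i and ℛ_{ij}(t) = 0 for j < i. Then for every t ∈ ℝ: (a) ℬ(t) = 𝒲(t) ℛ(t); (b) 𝒲(t) has rank rp and ℛ(t) has rank rp; (c) ℬ(t) has rank rp. -/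
open Matrix

/-- `ℬ(t) = [G(t), (D_A G)(t), …, (D_A^{r−1} G)(t)]`, block column `j` is `(D_A^j G)(t)`. -/
noncomputable def calB {n m : ℕ} (r : ℕ) (A : Matrix (Fin n) (Fin n) ℝ)
    (G : ℝ → Matrix (Fin n) (Fin m) ℝ) (t : ℝ) : Matrix (Fin n) (Fin r × Fin m) ℝ :=
  Matrix.of fun i jq => ((DA A)^[(jq.1 : ℕ)] G t) i jq.2

namespace Stmt19Aux

open Finset

variable {a b c e : ℕ}

def SmoothM (M : ℝ → Matrix (Fin a) (Fin b) ℝ) : Prop :=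
  ∀ i j, ContDiff ℝ (⊤ : ℕ∞) fun t => M t i j

theorem oneLeTop : (1 : WithTop ℕ∞) ≤ ((⊤ : ℕ∞) : WithTop ℕ∞) := by
  exact_mod_cast le_top

theorem SmoothM.matDeriv {M : ℝ → Matrix (Fin a) (Fin b) ℝ} (h : SmoothM M) :
    SmoothM (_root_.matDeriv M) := fun i j => by
  have := (contDiff_infty_iff_deriv.mp (h i j)).2
  simpa [_root_.matDeriv] using this

theorem SmoothM.diffAt {M : ℝ → Matrix (Fin a) (Fin b) ℝ} (h : SmoothM M) (i j) (t : ℝ) :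
    DifferentiableAt ℝ (fun s => M s i j) t :=
  ((h i j).differentiable (by simp)).differentiableAt

theorem SmoothM.const (K : Matrix (Fin a) (Fin b) ℝ) : SmoothM fun _ => K :=
  fun _ _ => contDiff_const

theorem SmoothM.mul {M : ℝ → Matrix (Fin a) (Fin b) ℝ} {N : ℝ → Matrix (Fin b) (Fin c) ℝ}
    (hM : SmoothM M) (hN : SmoothM N) : SmoothM fun t => M t * N t := fun i j => by
  simp only [Matrix.mul_apply]
  exact ContDiff.sum fun k _ => (hM i k).mul (hN k j)

theorem SmoothM.smul {M : ℝ → Matrix (Fin a) (Fin b) ℝ} (c : ℝ)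
    (hM : SmoothM M) : SmoothM fun t => c • M t := fun i j => by
  simp only [Matrix.smul_apply, smul_eq_mul]
  exact contDiff_const.mul (hM i j)

theorem SmoothM.da {A : Matrix (Fin a) (Fin a) ℝ} {M : ℝ → Matrix (Fin a) (Fin b) ℝ}
    (hM : SmoothM M) : SmoothM (DA A M) := fun i j => by
  simp only [DA, Matrix.sub_apply]
  exact (hM.matDeriv i j).sub ((SmoothM.mul (SmoothM.const A) hM) i j)

theorem SmoothM.da_iter {A : Matrix (Fin a) (Fin a) ℝ} {M : ℝ → Matrix (Fin a) (Fin b) ℝ}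
    (hM : SmoothM M) (j : ℕ) : SmoothM ((DA A)^[j] M) := by
  induction j with
  | zero => exact hM
  | succ j ih => rw [Function.iterate_succ_apply']; exact ih.da

theorem SmoothM.md_iter {M : ℝ → Matrix (Fin a) (Fin b) ℝ}
    (hM : SmoothM M) (j : ℕ) : SmoothM (_root_.matDeriv^[j] M) := by
  induction j with
  | zero => exact hM
  | succ j ih => rw [Function.iterate_succ_apply']; exact ih.matDeriv

theorem SmoothM.transpose {M : ℝ → Matrix (Fin a) (Fin b) ℝ} (hM : SmoothM M) :
    SmoothM fun t => (M t)ᵀ := fun i j => hM j i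


theorem matDeriv_const (K : Matrix (Fin a) (Fin b) ℝ) :
    _root_.matDeriv (fun _ : ℝ => K) = fun _ => 0 := by
  funext t i j
  simp [_root_.matDeriv]

theorem matDeriv_iter_zero (l : ℕ) :
    _root_.matDeriv^[l] (fun _ : ℝ => (0 : Matrix (Fin a) (Fin b) ℝ)) = fun _ => 0 := by
  induction l with
  | zero => rfl
  | succ l ih => rw [Function.iterate_succ_apply, matDeriv_const, ih]

theorem matDeriv_iter_const (K : Matrix (Fin a) (Fin b) ℝ) (l : ℕ) :
    _root_.matDeriv^[l] (fun _ : ℝ => K) = fun _ => if l = 0 then K else 0 := by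
  cases l with
  | zero => rfl
  | succ l => rw [Function.iterate_succ_apply, matDeriv_const, matDeriv_iter_zero]; simp

theorem matDeriv_sum {ι : Type*} (s : Finset ι) (f : ι → ℝ → Matrix (Fin a) (Fin b) ℝ)
    (hf : ∀ i ∈ s, SmoothM (f i)) (t : ℝ) :
    _root_.matDeriv (fun u => ∑ i ∈ s, f i u) t = ∑ i ∈ s, _root_.matDeriv (f i) t := by
  ext i j
  simp only [_root_.matDeriv, Matrix.of_apply, Matrix.sum_apply]
  exact deriv_fun_sum fun k hk => (hf k hk).diffAt i j t

theorem matDeriv_smul (c : ℝ) {M : ℝ → Matrix (Fin a) (Fin b) ℝ} (hM : SmoothM M) (t : ℝ) :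
    _root_.matDeriv (fun u => c • M u) t = c • _root_.matDeriv M t := by
  ext i j
  simp only [_root_.matDeriv, Matrix.of_apply, Matrix.smul_apply, smul_eq_mul]
  exact deriv_const_mul c (hM.diffAt i j t)

theorem matDeriv_const_mul (K : Matrix (Fin e) (Fin a) ℝ) {M : ℝ → Matrix (Fin a) (Fin b) ℝ}
    (hM : SmoothM M) (t : ℝ) :
    _root_.matDeriv (fun u => K * M u) t = K * _root_.matDeriv M t := by
  ext i j
  simp only [_root_.matDeriv, Matrix.of_apply, Matrix.mul_apply]
  rw [deriv_fun_sum fun k _ => (hM.diffAt k j t).const_mul (K i k)]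
  exact Finset.sum_congr rfl fun k _ => deriv_const_mul (K i k) (hM.diffAt k j t)

theorem matDeriv_mul {M : ℝ → Matrix (Fin a) (Fin b) ℝ} {N : ℝ → Matrix (Fin b) (Fin c) ℝ}
    (hM : SmoothM M) (hN : SmoothM N) (t : ℝ) :
    _root_.matDeriv (fun u => M u * N u) t =
      _root_.matDeriv M t * N t + M t * _root_.matDeriv N t := by
  ext i j
  simp only [_root_.matDeriv, Matrix.of_apply, Matrix.mul_apply, Matrix.add_apply]
  rw [deriv_fun_sum (A := fun k s => M s i k * N s k j) fun k _ => (hM.diffAt i k t).mul (hN.diffAt k j t),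
    Finset.sum_congr rfl fun k (_ : k ∈ Finset.univ) => deriv_fun_mul (hM.diffAt i k t) (hN.diffAt k j t),
    Finset.sum_add_distrib]

theorem DA_mul (A : Matrix (Fin a) (Fin a) ℝ) {M : ℝ → Matrix (Fin a) (Fin b) ℝ}
    {N : ℝ → Matrix (Fin b) (Fin c) ℝ} (hM : SmoothM M) (hN : SmoothM N) (t : ℝ) :
    DA A (fun u => M u * N u) t = DA A M t * N t + M t * _root_.matDeriv N t := by
  simp only [DA, matDeriv_mul hM hN, Matrix.sub_mul, ← Matrix.mul_assoc]
  abel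

theorem DA_sum_smul (A : Matrix (Fin a) (Fin a) ℝ) {ι : Type*} (s : Finset ι)
    (c : ι → ℝ) (f : ι → ℝ → Matrix (Fin a) (Fin b) ℝ) (hf : ∀ i ∈ s, SmoothM (f i)) (t : ℝ) :
    DA A (fun u => ∑ i ∈ s, c i • f i u) t = ∑ i ∈ s, c i • DA A (f i) t := by
  simp only [DA]
  rw [matDeriv_sum s (fun i u => c i • f i u) (fun i hi => (hf i hi).smul (c i)) t,
    Matrix.mul_sum, ← Finset.sum_sub_distrib]
  refine Finset.sum_congr rfl fun i hi => ?_
  rw [matDeriv_smul (c i) (hf i hi) t, Matrix.mul_smul, smul_sub]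

theorem DA_zero_op : (DA (0 : Matrix (Fin a) (Fin a) ℝ)
      : (ℝ → Matrix (Fin a) (Fin b) ℝ) → ℝ → Matrix (Fin a) (Fin b) ℝ) = _root_.matDeriv := by
  funext M t
  simp [DA]


theorem DA_iter_mul (A : Matrix (Fin a) (Fin a) ℝ) {M : ℝ → Matrix (Fin a) (Fin b) ℝ}
    {N : ℝ → Matrix (Fin b) (Fin c) ℝ} (hM : SmoothM M) (hN : SmoothM N) (j : ℕ) :
    (DA A)^[j] (fun u => M u * N u) = fun t =>
      ∑ i ∈ Finset.range (j + 1),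
        (j.choose i : ℝ) • ((DA A)^[i] M t * _root_.matDeriv^[j - i] N t) := by
  induction j with
  | zero => funext t; simp
  | succ j ih =>
    rw [Function.iterate_succ_apply', ih]
    funext t
    have hsm : ∀ i ∈ Finset.range (j + 1),
        SmoothM fun u => (DA A)^[i] M u * _root_.matDeriv^[j - i] N u :=
      fun i _ => (hM.da_iter i).mul (hN.md_iter (j - i))
    rw [DA_sum_smul A _ _ _ hsm t]
    have hterm : ∀ i ∈ Finset.range (j + 1),
        (j.choose i : ℝ) • DA A (fun u => (DA A)^[i] M u * _root_.matDeriv^[j - i] N u) t =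
          (j.choose i : ℝ) • ((DA A)^[i + 1] M t * _root_.matDeriv^[j - i] N t)
            + (j.choose i : ℝ) • ((DA A)^[i] M t * _root_.matDeriv^[j + 1 - i] N t) := by
      intro i hi
      have hji : j - i + 1 = j + 1 - i := by have := Finset.mem_range.mp hi; omega
      rw [DA_mul A (hM.da_iter i) (hN.md_iter (j - i)) t, smul_add,
        ← Function.iterate_succ_apply' (DA A) i M,
        ← Function.iterate_succ_apply' _root_.matDeriv (j - i) N]
      simp only [Nat.succ_eq_add_one, hji]
    rw [Finset.sum_congr rfl hterm, Finset.sum_add_distrib]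
    rw [Finset.sum_range_succ' (fun i =>
      ((j + 1).choose i : ℝ) • ((DA A)^[i] M t * _root_.matDeriv^[j + 1 - i] N t)) (j + 1)]
    simp only [Nat.succ_sub_succ, Nat.add_sub_add_right, Nat.choose_zero_right, Nat.cast_one,
      one_smul, Nat.sub_zero]
    have h2 : ∀ i ∈ Finset.range (j + 1),
        (((j + 1).choose (i + 1) : ℕ) : ℝ) • ((DA A)^[i + 1] M t * _root_.matDeriv^[j - i] N t)
          = (j.choose i : ℝ) • ((DA A)^[i + 1] M t * _root_.matDeriv^[j - i] N t)
            + (j.choose (i + 1) : ℝ) • ((DA A)^[i + 1] M t * _root_.matDeriv^[j - i] N t) := by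
      intro i _
      rw [Nat.choose_succ_succ, Nat.cast_add, add_smul]
    rw [Finset.sum_congr rfl h2, Finset.sum_add_distrib]
    have h3 : (∑ i ∈ Finset.range (j + 1),
          (j.choose i : ℝ) • ((DA A)^[i] M t * _root_.matDeriv^[j + 1 - i] N t))
        = (∑ i ∈ Finset.range (j + 1),
            (j.choose (i + 1) : ℝ) • ((DA A)^[i + 1] M t * _root_.matDeriv^[j - i] N t))
          + (DA A)^[0] M t * _root_.matDeriv^[j + 1] N t := by
      have e1 := Finset.sum_range_succ
        (fun i => (j.choose i : ℝ) • ((DA A)^[i] M t * _root_.matDeriv^[j + 1 - i] N t)) (j + 1)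
      have e2 := Finset.sum_range_succ'
        (fun i => (j.choose i : ℝ) • ((DA A)^[i] M t * _root_.matDeriv^[j + 1 - i] N t)) (j + 1)
      rw [e2, Nat.choose_succ_self, Nat.cast_zero, zero_smul, add_zero] at e1
      rw [← e1]
      simp only [Nat.succ_sub_succ, Nat.add_sub_add_right, Nat.choose_zero_right, Nat.cast_one,
        one_smul, Nat.sub_zero]
    rw [h3]
    abel

theorem matDeriv_iter_transpose {M : ℝ → Matrix (Fin a) (Fin b) ℝ} (k : ℕ) :
    _root_.matDeriv^[k] (fun s => (M s)ᵀ) = fun t => (_root_.matDeriv^[k] M t)ᵀ := by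
  induction k with
  | zero => rfl
  | succ k ih =>
    funext t i j
    rw [Function.iterate_succ_apply', Function.iterate_succ_apply', ih]
    rfl

theorem delta_sum {mm pp : ℕ} {R₁ : ℝ → Matrix (Fin mm) (Fin pp) ℝ} (hR : SmoothM R₁)
    (horth : ∀ t, (R₁ t)ᵀ * R₁ t = 1) (l : ℕ) (t : ℝ) :
    ∑ d ∈ Finset.range (l + 1),
        (l.choose d : ℝ) • ((_root_.matDeriv^[d] R₁ t)ᵀ * _root_.matDeriv^[l - d] R₁ t)
      = if l = 0 then (1 : Matrix (Fin pp) (Fin pp) ℝ) else 0 := by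
  have h := DA_iter_mul (0 : Matrix (Fin pp) (Fin pp) ℝ) hR.transpose hR l
  simp only [DA_zero_op] at h
  rw [show (fun u => (R₁ u)ᵀ * R₁ u) = fun _ : ℝ => (1 : Matrix (Fin pp) (Fin pp) ℝ) from
    funext horth, matDeriv_iter_const] at h
  have h2 := congrFun h t
  simp only [DA_zero_op, matDeriv_iter_transpose] at h2
  exact h2.symm

theorem md_of_zero_fun {K : Matrix (Fin c) (Fin a) ℝ} {M : ℝ → Matrix (Fin a) (Fin b) ℝ}
    (hM : SmoothM M) (hz : ∀ s, K * M s = 0) (t : ℝ) : K * _root_.matDeriv M t = 0 := by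
  rw [← matDeriv_const_mul K hM t,
    show (fun u => K * M u) = fun _ : ℝ => (0 : Matrix (Fin c) (Fin b) ℝ) from funext hz,
    matDeriv_const]

section Key

variable {nn pp r : ℕ} (A : Matrix (Fin nn) (Fin nn) ℝ) (C : Matrix (Fin pp) (Fin nn) ℝ)
  {W : ℝ → Matrix (Fin nn) (Fin pp) ℝ}

theorem keyA (hW : SmoothM W)
    (hCW : ∀ k : ℕ, k + 2 ≤ r → ∀ t : ℝ, C * A ^ k * W t = 0) :
    ∀ j i : ℕ, i + j + 2 ≤ r → ∀ t : ℝ, C * A ^ i * ((DA A)^[j] W t) = 0 := by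
  intro j
  induction j with
  | zero => intro i hi t; exact hCW i (by omega) t
  | succ j ih =>
    intro i hi t
    rw [Function.iterate_succ_apply', DA, Matrix.mul_sub]
    have h1 : C * A ^ i * _root_.matDeriv ((DA A)^[j] W) t = 0 :=
      md_of_zero_fun (hW.da_iter j) (fun s => ih i (by omega) s) t
    have h2 : C * A ^ i * (A * ((DA A)^[j] W t)) = C * A ^ (i + 1) * ((DA A)^[j] W t) := by
      simp [Matrix.mul_assoc, pow_succ]
    rw [h1, h2, ih (i + 1) (by omega) t, sub_zero]

theorem keyB (hW : SmoothM W)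
    (hCW : ∀ k : ℕ, k + 2 ≤ r → ∀ t : ℝ, C * A ^ k * W t = 0) :
    ∀ j i : ℕ, i + j + 1 = r → ∀ t : ℝ,
      C * A ^ i * ((DA A)^[j] W t) = (-1 : ℝ) ^ j • (C * A ^ (r - 1) * W t) := by
  intro j
  induction j with
  | zero =>
    intro i hi t
    have hir : i = r - 1 := by omega
    rw [hir, pow_zero, one_smul, Function.iterate_zero_apply]
  | succ j ih =>
    intro i hi t
    rw [Function.iterate_succ_apply', DA, Matrix.mul_sub]
    have h1 : C * A ^ i * _root_.matDeriv ((DA A)^[j] W) t = 0 :=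
      md_of_zero_fun (hW.da_iter j) (fun s => keyA A C hW hCW j i (by omega) s) t
    have h2 : C * A ^ i * (A * ((DA A)^[j] W t)) = C * A ^ (i + 1) * ((DA A)^[j] W t) := by
      simp [Matrix.mul_assoc, pow_succ]
    rw [h1, h2, ih (i + 1) (by omega) t, zero_sub, pow_succ, mul_comm ((-1 : ℝ) ^ j) (-1), mul_smul, neg_one_smul]

end Key

theorem sum_range_ite_le {β : Type*} [AddCommMonoid β] (r j : ℕ) (hj : j < r) (F : ℕ → β) :
    ∑ x ∈ Finset.range r, (if x ≤ j then F x else 0) = ∑ x ∈ Finset.range (j + 1), F x := by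
  rw [← Finset.sum_subset (Finset.range_subset_range.mpr (by omega : j + 1 ≤ r))
    (fun x _ hx => if_neg (fun hle => hx (Finset.mem_range.mpr (by omega))))]
  exact Finset.sum_congr rfl fun x hx => if_pos (by have := Finset.mem_range.mp hx; omega)

theorem sum_range_ite_between {β : Type*} [AddCommMonoid β] (r i k : ℕ) (hk : k < r) (F : ℕ → β) :
    ∑ x ∈ Finset.range r, (if i ≤ x ∧ x ≤ k then F x else 0) = ∑ x ∈ Finset.Icc i k, F x := by
  have hsub : Finset.Icc i k ⊆ Finset.range r := fun x hx =>
    Finset.mem_range.mpr (by have := Finset.mem_Icc.mp hx; omega)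
  rw [← Finset.sum_subset hsub (fun x _ hx => if_neg (by rwa [Finset.mem_Icc] at hx))]
  exact Finset.sum_congr rfl fun x hx => if_pos (Finset.mem_Icc.mp hx)

section Main

variable {n m p r : ℕ} (A : Matrix (Fin n) (Fin n) ℝ) (C : Matrix (Fin p) (Fin n) ℝ)
  {W : ℝ → Matrix (Fin n) (Fin p) ℝ} {R₁ : ℝ → Matrix (Fin m) (Fin p) ℝ}

theorem partA (hW : SmoothM W) (hR : SmoothM R₁) (t : ℝ) :
    calB r A (fun s => W s * (R₁ s)ᵀ) t =
      (Matrix.of fun i (jq : Fin r × Fin p) => ((DA A)^[(jq.1 : ℕ)] W t) i jq.2) *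
      (Matrix.of fun (iq : Fin r × Fin p) (jq : Fin r × Fin m) =>
        if (iq.1 : ℕ) ≤ (jq.1 : ℕ) then
          ((jq.1 : ℕ).choose (iq.1 : ℕ) : ℝ) *
            ((_root_.matDeriv^[(jq.1 : ℕ) - (iq.1 : ℕ)] R₁) t)ᵀ iq.2 jq.2
        else 0) := by
  ext i jq
  obtain ⟨j, bb⟩ := jq
  set F : ℕ → ℝ := fun x => ∑ aa : Fin p, ((j : ℕ).choose x : ℝ) *
    ((DA A)^[x] W t i aa * (_root_.matDeriv^[(j : ℕ) - x] R₁ t)ᵀ aa bb) with hF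
  have hL : calB r A (fun s => W s * (R₁ s)ᵀ) t i (j, bb)
      = ∑ x ∈ Finset.range ((j : ℕ) + 1), F x := by
    show ((DA A)^[(j : ℕ)] (fun s => W s * (R₁ s)ᵀ) t) i bb = _
    rw [DA_iter_mul A hW hR.transpose (j : ℕ)]
    simp only [Matrix.sum_apply, Matrix.smul_apply, Matrix.mul_apply, matDeriv_iter_transpose,
      smul_eq_mul, Finset.mul_sum, hF]
  rw [hL, Matrix.mul_apply, Fintype.sum_prod_type]
  have hstep : ∀ x : Fin r,
      (∑ aa : Fin p, (Matrix.of fun i (jq : Fin r × Fin p) => ((DA A)^[(jq.1 : ℕ)] W t) i jq.2)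
          i (x, aa) *
        (Matrix.of fun (iq : Fin r × Fin p) (jq : Fin r × Fin m) =>
          if (iq.1 : ℕ) ≤ (jq.1 : ℕ) then
            ((jq.1 : ℕ).choose (iq.1 : ℕ) : ℝ) *
              ((_root_.matDeriv^[(jq.1 : ℕ) - (iq.1 : ℕ)] R₁) t)ᵀ iq.2 jq.2
          else 0) (x, aa) (j, bb))
      = if (x : ℕ) ≤ (j : ℕ) then F (x : ℕ) else 0 := by
    intro x
    by_cases hx : (x : ℕ) ≤ (j : ℕ)
    · simp only [Matrix.of_apply, hx, if_true, hF]
      exact Finset.sum_congr rfl fun aa _ => by ring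
    · have hx' : ¬ x ≤ j := fun h => hx h
      simp [Matrix.of_apply, hx, hx']
  rw [Finset.sum_congr rfl fun x _ => hstep x]
  rw [Fin.sum_univ_eq_sum_range (fun x => if x ≤ (j : ℕ) then F x else 0) r]
  rw [sum_range_ite_le r (j : ℕ) j.isLt F]

theorem RS_eq_one (hR : SmoothM R₁) (horth : ∀ t, (R₁ t)ᵀ * R₁ t = 1) (t : ℝ) :
    (Matrix.of fun (iq : Fin r × Fin p) (jq : Fin r × Fin m) =>
        if (iq.1 : ℕ) ≤ (jq.1 : ℕ) then
          ((jq.1 : ℕ).choose (iq.1 : ℕ) : ℝ) *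
            ((_root_.matDeriv^[(jq.1 : ℕ) - (iq.1 : ℕ)] R₁) t)ᵀ iq.2 jq.2
        else 0) *
      (Matrix.of fun (jq : Fin r × Fin m) (kq : Fin r × Fin p) =>
        if (jq.1 : ℕ) ≤ (kq.1 : ℕ) then
          ((kq.1 : ℕ).choose (jq.1 : ℕ) : ℝ) *
            ((_root_.matDeriv^[(kq.1 : ℕ) - (jq.1 : ℕ)] R₁) t) jq.2 kq.2
        else 0) = 1 := by
  ext iq kq
  obtain ⟨i, aa⟩ := iq
  obtain ⟨k, cc⟩ := kq
  set G : ℕ → ℝ := fun x => ((x.choose (i : ℕ) : ℝ) * ((k : ℕ).choose x : ℝ)) *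
    ((_root_.matDeriv^[x - (i : ℕ)] R₁ t)ᵀ * _root_.matDeriv^[(k : ℕ) - x] R₁ t) aa cc with hG
  rw [Matrix.mul_apply, Fintype.sum_prod_type]
  simp only [Matrix.of_apply]
  have hstep : ∀ x : Fin r,
      (∑ bb : Fin m,
        (if (i : ℕ) ≤ (x : ℕ) then
          ((x : ℕ).choose (i : ℕ) : ℝ) * ((_root_.matDeriv^[(x : ℕ) - (i : ℕ)] R₁) t)ᵀ aa bb
        else 0) *
        (if (x : ℕ) ≤ (k : ℕ) then
          ((k : ℕ).choose (x : ℕ) : ℝ) * ((_root_.matDeriv^[(k : ℕ) - (x : ℕ)] R₁) t) bb cc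
        else 0))
      = if (i : ℕ) ≤ (x : ℕ) ∧ (x : ℕ) ≤ (k : ℕ) then G (x : ℕ) else 0 := by
    intro x
    by_cases h1 : (i : ℕ) ≤ (x : ℕ)
    · by_cases h2 : (x : ℕ) ≤ (k : ℕ)
      · simp only [h1, h2, if_true, and_self, hG, Matrix.mul_apply, Finset.mul_sum]
        exact Finset.sum_congr rfl fun bb _ => by ring
      · simp [h1, h2]
    · simp [h1]
  rw [Finset.sum_congr rfl fun x _ => hstep x]
  rw [Fin.sum_univ_eq_sum_range (fun x => if (i : ℕ) ≤ x ∧ x ≤ (k : ℕ) then G x else 0) r]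
  rw [sum_range_ite_between r (i : ℕ) (k : ℕ) k.isLt G]
  by_cases hik : (i : ℕ) ≤ (k : ℕ)
  · rw [← Finset.Ico_add_one_right_eq_Icc, Finset.sum_Ico_eq_sum_range]
    have hl : (k : ℕ) + 1 - (i : ℕ) = ((k : ℕ) - (i : ℕ)) + 1 := by omega
    set l : ℕ := (k : ℕ) - (i : ℕ) with hldef
    rw [hl]
    have hterm : ∀ d ∈ Finset.range (l + 1),
        G ((i : ℕ) + d) = ((k : ℕ).choose (i : ℕ) : ℝ) *
          ((l.choose d : ℝ) • ((_root_.matDeriv^[d] R₁ t)ᵀ * _root_.matDeriv^[l - d] R₁ t)) aa cc := by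
      intro d hd
      have hd' : d ≤ l := by have := Finset.mem_range.mp hd; omega
      have hidk : (i : ℕ) + d ≤ (k : ℕ) := by omega
      have hc : (((i : ℕ) + d).choose (i : ℕ) : ℝ) * ((k : ℕ).choose ((i : ℕ) + d) : ℝ)
          = ((k : ℕ).choose (i : ℕ) : ℝ) * (l.choose d : ℝ) := by
        rw [← Nat.cast_mul, ← Nat.cast_mul, mul_comm (((i : ℕ) + d).choose (i : ℕ))]
        rw [Nat.choose_mul (n := (k : ℕ)) (Nat.le_add_right _ _)]
        have hdd : (i : ℕ) + d - (i : ℕ) = d := by omega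
        rw [hdd, hldef]
      have e1 : (i : ℕ) + d - (i : ℕ) = d := by omega
      have e2 : (k : ℕ) - ((i : ℕ) + d) = l - d := by omega
      rw [hG]
      simp only [e1, e2, hc, Matrix.smul_apply, smul_eq_mul]
      ring
    rw [Finset.sum_congr rfl hterm, ← Finset.mul_sum, ← Matrix.sum_apply]
    rw [delta_sum hR horth l t]
    by_cases hl0 : l = 0
    · have hik' : i = k := Fin.ext (by omega)
      subst hik'
      simp [hl0, Matrix.one_apply, Prod.ext_iff]
    · have hik' : ((i, aa) : Fin r × Fin p) ≠ (k, cc) := by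
        intro h
        have : i = k := congrArg Prod.fst h
        apply hl0
        rw [hldef, this]
        omega
      rw [Matrix.one_apply_ne hik']
      simp [hl0]
  · rw [Finset.Icc_eq_empty (by omega), Finset.sum_empty]
    have hik' : ((i, aa) : Fin r × Fin p) ≠ (k, cc) := by
      intro h
      exact hik (le_of_eq (congrArg (fun z : Fin r × Fin p => (z.1 : ℕ)) h))
    rw [Matrix.one_apply_ne hik']

theorem rank_Wmat (hr : 1 ≤ r) (hW : SmoothM W)
    (hCW : ∀ k : ℕ, k + 2 ≤ r → ∀ t : ℝ, C * A ^ k * W t = 0)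
    (hinv : ∀ t : ℝ, IsUnit (C * A ^ (r - 1) * W t)) (t : ℝ) :
    (Matrix.of fun i (jq : Fin r × Fin p) => ((DA A)^[(jq.1 : ℕ)] W t) i jq.2).rank = r * p := by
  set 𝒲 : Matrix (Fin n) (Fin r × Fin p) ℝ :=
    Matrix.of fun i jq => ((DA A)^[(jq.1 : ℕ)] W t) i jq.2 with h𝒲
  set O : Matrix (Fin r × Fin p) (Fin n) ℝ :=
    Matrix.of fun iq j => (C * A ^ (r - 1 - (iq.1 : ℕ))) iq.2 j with hO
  have hOW : ∀ iq jq : Fin r × Fin p, (O * 𝒲) iq jq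
      = (C * A ^ (r - 1 - (iq.1 : ℕ)) * ((DA A)^[(jq.1 : ℕ)] W t)) iq.2 jq.2 := by
    intro iq jq
    rw [Matrix.mul_apply, Matrix.mul_apply]
    rfl
  have hBT : Matrix.BlockTriangular (O * 𝒲) (fun iq : Fin r × Fin p => iq.1) := by
    intro iq jq hlt
    rw [hOW, keyA A C hW hCW (jq.1 : ℕ) (r - 1 - (iq.1 : ℕ))
      (by have h1 := iq.1.isLt; have h2 : (jq.1 : ℕ) < (iq.1 : ℕ) := hlt; omega) t]
    rfl
  have hdet : (O * 𝒲).det ≠ 0 := by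
    rw [hBT.det]
    apply Finset.prod_ne_zero_iff.mpr
    intro k _
    set e : {iq : Fin r × Fin p // iq.1 = k} ≃ Fin p :=
      { toFun := fun x => x.1.2
        invFun := fun a => ⟨(k, a), rfl⟩
        left_inv := fun x => Subtype.ext (Prod.ext x.2.symm rfl)
        right_inv := fun a => rfl } with he
    have hblock : (O * 𝒲).toSquareBlock (fun iq => iq.1) k
        = ((-1 : ℝ) ^ (k : ℕ) • (C * A ^ (r - 1) * W t)).submatrix e e := by
      ext x y
      have hx : x.1.1 = k := x.2
      have hy : y.1.1 = k := y.2
      show (O * 𝒲) x.1 y.1 = _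
      rw [hOW, hx, hy]
      rw [keyB A C hW hCW (k : ℕ) (r - 1 - (k : ℕ)) (by have := k.isLt; omega) t]
      rfl
    rw [hblock, Matrix.det_submatrix_equiv_self, Matrix.det_smul]
    exact mul_ne_zero (pow_ne_zero _ (pow_ne_zero _ (by norm_num)))
      ((Matrix.isUnit_iff_isUnit_det _).mp (hinv t)).ne_zero
  have hunit : IsUnit (O * 𝒲) := (Matrix.isUnit_iff_isUnit_det _).mpr (isUnit_iff_ne_zero.mpr hdet)
  have h1 : (O * 𝒲).rank = r * p := by
    rw [Matrix.rank_of_isUnit _ hunit, Fintype.card_prod, Fintype.card_fin, Fintype.card_fin]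
  refine le_antisymm ?_ ?_
  · have := 𝒲.rank_le_card_width
    rwa [Fintype.card_prod, Fintype.card_fin, Fintype.card_fin] at this
  · rw [← h1]
    exact Matrix.rank_mul_le_right O 𝒲

end Main

end Stmt19Aux

theorem stmt19 (n m p r : ℕ) (hr : 1 ≤ r)
    (A : Matrix (Fin n) (Fin n) ℝ) (C : Matrix (Fin p) (Fin n) ℝ)
    (W : ℝ → Matrix (Fin n) (Fin p) ℝ) (R₁ : ℝ → Matrix (Fin m) (Fin p) ℝ)
    (hW : ∀ i j, ContDiff ℝ (⊤ : ℕ∞) fun t => W t i j)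
    (hR : ∀ i j, ContDiff ℝ (⊤ : ℕ∞) fun t => R₁ t i j)
    (horth : ∀ t : ℝ, (R₁ t)ᵀ * R₁ t = 1)
    (hCW : ∀ k : ℕ, k + 2 ≤ r → ∀ t : ℝ, C * A ^ k * W t = 0)
    (hinv : ∀ t : ℝ, IsUnit (C * A ^ (r - 1) * W t)) :
    ∀ t : ℝ,
      let 𝒲 : Matrix (Fin n) (Fin r × Fin p) ℝ :=
        Matrix.of fun i jq => ((DA A)^[(jq.1 : ℕ)] W t) i jq.2
      let ℛ : Matrix (Fin r × Fin p) (Fin r × Fin m) ℝ :=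
        Matrix.of fun iq jq =>
          if (iq.1 : ℕ) ≤ (jq.1 : ℕ) then
            ((jq.1 : ℕ).choose (iq.1 : ℕ) : ℝ) *
              ((matDeriv^[(jq.1 : ℕ) - (iq.1 : ℕ)] R₁) t)ᵀ iq.2 jq.2
          else 0
      let B : Matrix (Fin n) (Fin r × Fin m) ℝ := calB r A (fun s => W s * (R₁ s)ᵀ) t
      B = 𝒲 * ℛ ∧ (𝒲.rank = r * p ∧ ℛ.rank = r * p) ∧ B.rank = r * p := by
  intro t 𝒲 ℛ B
  have hW' : Stmt19Aux.SmoothM W := fun i j => (hW i j).of_le (by simp)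
  have hR' : Stmt19Aux.SmoothM R₁ := fun i j => (hR i j).of_le (by simp)
  have hBA : B = 𝒲 * ℛ := Stmt19Aux.partA A hW' hR' t
  have hrank𝒲 : 𝒲.rank = r * p := Stmt19Aux.rank_Wmat A C hr hW' hCW hinv t
  set S : Matrix (Fin r × Fin m) (Fin r × Fin p) ℝ :=
    Matrix.of fun (jq : Fin r × Fin m) (kq : Fin r × Fin p) =>
      if (jq.1 : ℕ) ≤ (kq.1 : ℕ) then
        ((kq.1 : ℕ).choose (jq.1 : ℕ) : ℝ) *
          ((matDeriv^[(kq.1 : ℕ) - (jq.1 : ℕ)] R₁) t) jq.2 kq.2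
      else 0 with hS
  have hRS : ℛ * S = 1 := Stmt19Aux.RS_eq_one hR' horth t
  have hcard : Fintype.card (Fin r × Fin p) = r * p := by
    rw [Fintype.card_prod, Fintype.card_fin, Fintype.card_fin]
  have hrankℛ : ℛ.rank = r * p := by
    refine le_antisymm ?_ ?_
    · have := ℛ.rank_le_card_height
      rwa [hcard] at this
    · have h2 : (ℛ * S).rank ≤ ℛ.rank := Matrix.rank_mul_le_left ℛ S
      rwa [hRS, Matrix.rank_one, hcard] at h2
  have hBS : B * S = 𝒲 := by
    rw [hBA, Matrix.mul_assoc, hRS, Matrix.mul_one]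
  have hrankB : B.rank = r * p := by
    refine le_antisymm ?_ ?_
    · have h2 : (𝒲 * ℛ).rank ≤ 𝒲.rank := Matrix.rank_mul_le_left 𝒲 ℛ
      rw [← hBA] at h2
      exact h2.trans_eq hrank𝒲
    · have h2 : (B * S).rank ≤ B.rank := Matrix.rank_mul_le_left B S
      rwa [hBS, hrank𝒲] at h2
  exact ⟨hBA, ⟨hrank𝒲, hrankℛ⟩, hrankB⟩
end
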